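/- arXiv:1410.2266 — 5 statements merged into one kernel-verified Lean document; each statement's English description precedes it below -/
import Mathlib

section
/- Let k ≥ 2 and j₀ ≥ 1 be integers, let n = k·2^{j₀−1}, let q be a probability distribution on [n], and let p = U_n. Then ‖q − p‖²_{[k]} ≤ 10⁸ · Σ_{j=0}^{j₀−1} Σ_{i=1}^{k·2^j} Discr(I_i^{(j)})² / width(I_i^{(j)})^{1/8}, where I^{(j)} = (I_i^{(j)})_{i=1}^{k·2^j} is the partition of [n] into k·2^j equal-length consecutive intervals. -/
/-!
Cut an interval of length at most `n / k = 2^L` at the boundary of the dyadic block of the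
largest scale that it crosses: what remains are a suffix of one dyadic block and a prefix of the
next. A one-sided piece peels off its largest dyadic sub-block, which is at least as long as the
remainder. Since the weight `w^{-1/8}` gains a factor `2^{-1/8} < 0.92` when the width at least
doubles, the remainder enters with a factor `0.97 < 1`, and the peeling sums geometrically. So the
term of each interval is at most `2000` times the sum of the terms of the dyadic intervals inside
it, and disjoint intervals contain disjoint dyadic intervals.
-/

open Finset ProbabilityTheory MeasureTheory

/-- The probability mass that a function on `Fin n` assigns to the (0-indexed)
interval `[a, b)`. -/
noncomputable def intervalMass {n : ℕ} (q : Fin n → ℝ) (a b : ℕ) : ℝ :=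
  ∑ j ∈ Finset.univ.filter (fun j : Fin n => a ≤ (j : ℕ) ∧ (j : ℕ) < b), q j

/-- `q` is a probability distribution on `[n]` (identified with `Fin n`). -/
noncomputable def IsDist {n : ℕ} (q : Fin n → ℝ) : Prop := (∀ i, 0 ≤ q i) ∧ ∑ i, q i = 1

/-- The `A_k` distance between `p` and `q` on `Fin n`: the supremum, over all partitions of
`Fin n` into `k` consecutive intervals (described by their monotone sequence of boundary
points), of the sum of the discrepancies `|p(I) - q(I)|` over the intervals. -/
noncomputable def AkDist (n k : ℕ) (p q : Fin n → ℝ) : ℝ :=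
  sSup { x : ℝ | ∃ b : Fin (k + 1) → ℕ, Monotone b ∧ b 0 = 0 ∧ b (Fin.last k) = n ∧
    x = ∑ i : Fin k,
      |intervalMass p (b i.castSucc) (b i.succ) - intervalMass q (b i.castSucc) (b i.succ)| }

/-- The `L1` distance between two functions on `Fin n`. -/
noncomputable def L1Dist {n : ℕ} (p q : Fin n → ℝ) : ℝ := ∑ i, |p i - q i|

/-- The `L2` distance between two functions on `Fin n`. -/
noncomputable def L2Dist {n : ℕ} (p q : Fin n → ℝ) : ℝ := Real.sqrt (∑ i, (p i - q i) ^ 2)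

/-- The uniform distribution on `Fin n`. -/
noncomputable def unif (n : ℕ) : Fin n → ℝ := fun _ => 1 / n

/-- The probability that the `m`-fold product measure `q^{⊗m}` assigns to a set
`A ⊆ [n]^m` of sample sequences. -/
noncomputable def prodProb {n m : ℕ} (q : Fin n → ℝ) (A : Finset (Fin m → Fin n)) : ℝ :=
  ∑ x ∈ A, ∏ j, q (x j)

/-- The reduced distribution of `q` w.r.t. the partition of `Fin n` into `ℓ` consecutive
intervals of equal length `n / ℓ` (assuming `ℓ ∣ n`). -/
noncomputable def reducedDist {n : ℕ} (q : Fin n → ℝ) (ℓ : ℕ) : Fin ℓ → ℝ :=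
  fun i => intervalMass q ((i : ℕ) * (n / ℓ)) (((i : ℕ) + 1) * (n / ℓ))

/-- `p` is a `t`-piecewise degree-`d` function on `Fin n`: there is a partition of `Fin n`
into `t` consecutive intervals on each of which `p` agrees with a real polynomial of degree
at most `d`. -/
noncomputable def IsPiecewisePoly {n : ℕ} (t d : ℕ) (p : Fin n → ℝ) : Prop :=
  ∃ b : Fin (t + 1) → ℕ, Monotone b ∧ b 0 = 0 ∧ b (Fin.last t) = n ∧
    ∀ i : Fin t, ∃ P : Polynomial ℝ, P.degree ≤ (d : ℕ) ∧
      ∀ x : Fin n, b i.castSucc ≤ (x : ℕ) → (x : ℕ) < b i.succ → p x = P.eval ((x : ℕ) : ℝ)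

/-- `q` is `k`-flat: there is a partition of `Fin n` into `k` consecutive intervals
on each of which `q` is constant. -/
noncomputable def IsKFlat {n : ℕ} (k : ℕ) (q : Fin n → ℝ) : Prop :=
  ∃ b : Fin (k + 1) → ℕ, Monotone b ∧ b 0 = 0 ∧ b (Fin.last k) = n ∧
    ∀ i : Fin k, ∃ c : ℝ, ∀ x : Fin n, b i.castSucc ≤ (x : ℕ) → (x : ℕ) < b i.succ → q x = c

/-- The term `Discr(I)² / width(I)^{1/8}` for the interval `I = [a, b)` in `Fin n`, where
the discrepancy is `Discr(I) = |q(I) - U_n(I)|` and the width is `|I|/n` (relative to the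
uniform distribution `U_n`). -/
noncomputable def ssTerm {n : ℕ} (q : Fin n → ℝ) (a b : ℕ) : ℝ :=
  |intervalMass q a b - ((b - a : ℕ) : ℝ) / n| ^ 2 / (((b - a : ℕ) : ℝ) / n) ^ ((1 : ℝ) / 8)

/-- The squared scale-sensitive-`L2` distance between `q` and the uniform distribution
on `Fin n`, at scale `1/k`: the supremum, over all partitions of `Fin n` into consecutive
nonempty intervals each of width at most `1/k`, of `∑ Discr(I)² / width(I)^{1/8}`. -/
noncomputable def ssDistSq (n k : ℕ) (q : Fin n → ℝ) : ℝ :=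
  sSup { x : ℝ | ∃ r : ℕ, ∃ b : Fin (r + 1) → ℕ, StrictMono b ∧ b 0 = 0 ∧ b (Fin.last r) = n ∧
    (∀ i : Fin r, ((b i.succ - b i.castSucc : ℕ) : ℝ) / n ≤ 1 / k) ∧
    x = ∑ i : Fin r, ssTerm q (b i.castSucc) (b i.succ) }

theorem one_half_rpow_one_div_eight_le : ((1 : ℝ) / 2) ^ ((1 : ℝ) / 8) ≤ 0.92 := by
  rw [one_div 8, Real.rpow_inv_le_iff_of_pos (by norm_num) (by norm_num) (by norm_num),
    show (8 : ℝ) = (8 : ℕ) by norm_num, Real.rpow_natCast]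
  norm_num

theorem rpow_one_div_eight_le_of_two_mul_le {c d : ℝ} (hc : 0 ≤ c) (h : 2 * c ≤ d) :
    c ^ ((1 : ℝ) / 8) ≤ 0.92 * d ^ ((1 : ℝ) / 8) := by
  calc c ^ ((1 : ℝ) / 8) = ((1 : ℝ) / 2) ^ ((1 : ℝ) / 8) * (2 * c) ^ ((1 : ℝ) / 8) := by
        rw [← Real.mul_rpow (by norm_num) (by positivity)]; ring_nf
    _ ≤ 0.92 * d ^ ((1 : ℝ) / 8) := by
        gcongr
        exact one_half_rpow_one_div_eight_le

theorem sq_div_rpow_add_le_two_mul {e₁ e₂ w₁ w₂ : ℝ} (hw₁ : 0 < w₁) (hw₂ : 0 < w₂) :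
    (e₁ + e₂) ^ 2 / (w₁ + w₂) ^ ((1 : ℝ) / 8) ≤
      2 * (e₁ ^ 2 / w₁ ^ ((1 : ℝ) / 8)) + 2 * (e₂ ^ 2 / w₂ ^ ((1 : ℝ) / 8)) := by
  calc (e₁ + e₂) ^ 2 / (w₁ + w₂) ^ ((1 : ℝ) / 8)
      ≤ (2 * e₁ ^ 2 + 2 * e₂ ^ 2) / (w₁ + w₂) ^ ((1 : ℝ) / 8) := by
        gcongr; nlinarith [sq_nonneg (e₁ - e₂)]
    _ = 2 * (e₁ ^ 2 / (w₁ + w₂) ^ ((1 : ℝ) / 8)) + 2 * (e₂ ^ 2 / (w₁ + w₂) ^ ((1 : ℝ) / 8)) := by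
        ring
    _ ≤ 2 * (e₁ ^ 2 / w₁ ^ ((1 : ℝ) / 8)) + 2 * (e₂ ^ 2 / w₂ ^ ((1 : ℝ) / 8)) := by
        gcongr <;> linarith

theorem sq_div_rpow_add_le_of_le {e₁ e₂ w₁ w₂ : ℝ} (hw₁ : 0 < w₁) (h : w₁ ≤ w₂) :
    (e₁ + e₂) ^ 2 / (w₁ + w₂) ^ ((1 : ℝ) / 8) ≤
      0.97 * (e₁ ^ 2 / w₁ ^ ((1 : ℝ) / 8)) + 21 * (e₂ ^ 2 / w₂ ^ ((1 : ℝ) / 8)) := by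
  have hw : 0 < (w₁ + w₂) ^ ((1 : ℝ) / 8) := by apply Real.rpow_pos_of_pos; linarith
  have hw₁' : 0 < w₁ ^ ((1 : ℝ) / 8) := Real.rpow_pos_of_pos hw₁ _
  have hw₂' : 0 < w₂ ^ ((1 : ℝ) / 8) := Real.rpow_pos_of_pos (hw₁.trans_le h) _
  have hgain : e₁ ^ 2 / (w₁ + w₂) ^ ((1 : ℝ) / 8) ≤ 0.92 * (e₁ ^ 2 / w₁ ^ ((1 : ℝ) / 8)) := by
    rw [mul_div_assoc', div_le_div_iff₀ hw hw₁']
    have := rpow_one_div_eight_le_of_two_mul_le hw₁.le (by linarith : 2 * w₁ ≤ w₁ + w₂)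
    nlinarith [mul_le_mul_of_nonneg_left this (sq_nonneg e₁)]
  have hmono : e₂ ^ 2 / (w₁ + w₂) ^ ((1 : ℝ) / 8) ≤ e₂ ^ 2 / w₂ ^ ((1 : ℝ) / 8) :=
    div_le_div_of_nonneg_left (sq_nonneg _) hw₂'
      (Real.rpow_le_rpow (hw₁.trans_le h).le (by linarith) (by norm_num))
  calc (e₁ + e₂) ^ 2 / (w₁ + w₂) ^ ((1 : ℝ) / 8)
      ≤ (1.05 * e₁ ^ 2 + 21 * e₂ ^ 2) / (w₁ + w₂) ^ ((1 : ℝ) / 8) := by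
        gcongr; nlinarith [sq_nonneg (e₁ - 20 * e₂)]
    _ = 1.05 * (e₁ ^ 2 / (w₁ + w₂) ^ ((1 : ℝ) / 8)) +
          21 * (e₂ ^ 2 / (w₁ + w₂) ^ ((1 : ℝ) / 8)) := by
        ring
    _ ≤ 0.97 * (e₁ ^ 2 / w₁ ^ ((1 : ℝ) / 8)) + 21 * (e₂ ^ 2 / w₂ ^ ((1 : ℝ) / 8)) := by
        have : 0 ≤ e₁ ^ 2 / w₁ ^ ((1 : ℝ) / 8) := by positivity
        linarith

theorem Monotone.sum_le_of_superadditive {α M : Type*} [Preorder α] [AddCommMonoid M]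
    [PartialOrder M] [IsOrderedAddMonoid M] {f : α → α → M}
    (hf : ∀ a m b, a ≤ m → m ≤ b → f a m + f m b ≤ f a b) (hf₀ : ∀ a, 0 ≤ f a a) {r : ℕ}
    {b : Fin (r + 1) → α} (hb : Monotone b) :
    ∑ i : Fin r, f (b i.castSucc) (b i.succ) ≤ f (b 0) (b (Fin.last r)) := by
  induction r with
  | zero => simpa using hf₀ (b 0)
  | succ r ih =>
    rw [Fin.sum_univ_castSucc]
    have hprefix := ih (b := b ∘ Fin.castSucc) (fun _ _ h => hb (Fin.castSucc_le_castSucc_iff.2 h))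
    simp only [Function.comp_apply, Fin.castSucc_zero, ← Fin.succ_castSucc] at hprefix
    calc _ ≤ f (b 0) (b (Fin.last r).castSucc) +
          f (b (Fin.last r).castSucc) (b (Fin.last r).succ) := add_le_add_left hprefix _
      _ ≤ f (b 0) (b (Fin.last (r + 1))) := hf _ _ _ (hb (Fin.zero_le _)) (hb (Fin.le_last _))

noncomputable def intervalWidth (n a b : ℕ) : ℝ := ((b - a : ℕ) : ℝ) / n

section Interval

variable {n : ℕ} (q : Fin n → ℝ)

noncomputable def intervalDiscr (a b : ℕ) : ℝ := intervalMass q a b - intervalWidth n a b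

theorem ssTerm_eq (a b : ℕ) :
    ssTerm q a b = intervalDiscr q a b ^ 2 / intervalWidth n a b ^ ((1 : ℝ) / 8) := by
  rw [ssTerm, sq_abs]; rfl

theorem ssTerm_nonneg (a b : ℕ) : 0 ≤ ssTerm q a b := by
  unfold ssTerm; positivity

theorem intervalMass_add {a m b : ℕ} (h₁ : a ≤ m) (h₂ : m ≤ b) :
    intervalMass q a m + intervalMass q m b = intervalMass q a b := by
  unfold intervalMass
  rw [← sum_union (disjoint_filter.2 fun j _ hj hj' => by omega)]
  congr 1
  ext j
  simp only [mem_union, mem_filter, mem_univ, true_and]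
  omega

theorem intervalWidth_add {a m b : ℕ} (h₁ : a ≤ m) (h₂ : m ≤ b) :
    intervalWidth n a m + intervalWidth n m b = intervalWidth n a b := by
  unfold intervalWidth
  rw [← add_div, ← Nat.cast_add]
  congr 2
  omega

theorem intervalDiscr_add {a m b : ℕ} (h₁ : a ≤ m) (h₂ : m ≤ b) :
    intervalDiscr q a m + intervalDiscr q m b = intervalDiscr q a b := by
  unfold intervalDiscr
  rw [← intervalMass_add q h₁ h₂, ← intervalWidth_add h₁ h₂]
  ring

theorem intervalWidth_pos (hn : 0 < n) {a b : ℕ} (h : a < b) : 0 < intervalWidth n a b := by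
  unfold intervalWidth
  have : 0 < b - a := by omega
  positivity

theorem intervalWidth_le_intervalWidth {a b c d : ℕ} (h : b - a ≤ d - c) :
    intervalWidth n a b ≤ intervalWidth n c d := by
  unfold intervalWidth
  gcongr

variable {q}

theorem ssTerm_le_two_mul_add (hn : 0 < n) {a m b : ℕ} (h₁ : a < m) (h₂ : m < b) :
    ssTerm q a b ≤ 2 * ssTerm q a m + 2 * ssTerm q m b := by
  rw [ssTerm_eq, ssTerm_eq, ssTerm_eq, ← intervalWidth_add h₁.le h₂.le,
    ← intervalDiscr_add q h₁.le h₂.le]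
  exact sq_div_rpow_add_le_two_mul (intervalWidth_pos hn h₁) (intervalWidth_pos hn h₂)

theorem ssTerm_le_of_two_mul_le (hn : 0 < n) {a m b : ℕ} (h₁ : a < m) (h₂ : m ≤ b)
    (h : 2 * m ≤ a + b) : ssTerm q a b ≤ 0.97 * ssTerm q a m + 21 * ssTerm q m b := by
  rw [ssTerm_eq, ssTerm_eq, ssTerm_eq, ← intervalWidth_add h₁.le h₂,
    ← intervalDiscr_add q h₁.le h₂]
  exact sq_div_rpow_add_le_of_le (intervalWidth_pos hn h₁)
    (intervalWidth_le_intervalWidth (by omega))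

theorem ssTerm_le_of_le_two_mul (hn : 0 < n) {a m b : ℕ} (h₁ : a ≤ m) (h₂ : m < b)
    (h : a + b ≤ 2 * m) : ssTerm q a b ≤ 21 * ssTerm q a m + 0.97 * ssTerm q m b := by
  rw [ssTerm_eq, ssTerm_eq, ssTerm_eq, ← intervalWidth_add h₁ h₂.le,
    ← intervalDiscr_add q h₁ h₂.le, add_comm (intervalDiscr q a m), add_comm (intervalWidth n a m),
    add_comm (21 * _)]
  exact sq_div_rpow_add_le_of_le (intervalWidth_pos hn h₂)
    (intervalWidth_le_intervalWidth (by omega))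

end Interval

/-- The pairs `(s, i)` with `s ≤ L` such that the dyadic interval `[i 2^s, (i + 1) 2^s)` lies
in `[a, b)`. -/
def dyadicIndices (L a b : ℕ) : Finset (ℕ × ℕ) :=
  (range (L + 1) ×ˢ range b).filter fun p => a ≤ p.2 * 2 ^ p.1 ∧ (p.2 + 1) * 2 ^ p.1 ≤ b

theorem mem_dyadicIndices {L a b : ℕ} {p : ℕ × ℕ} :
    p ∈ dyadicIndices L a b ↔ p.1 ≤ L ∧ a ≤ p.2 * 2 ^ p.1 ∧ (p.2 + 1) * 2 ^ p.1 ≤ b := by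
  have : p.2 + 1 ≤ (p.2 + 1) * 2 ^ p.1 := Nat.le_mul_of_pos_right _ (by positivity)
  simp only [dyadicIndices, mem_filter, mem_product, mem_range]
  omega

section Dyadic

variable {n : ℕ} (q : Fin n → ℝ) (L : ℕ)

noncomputable def dyadicSum (a b : ℕ) : ℝ :=
  ∑ p ∈ dyadicIndices L a b, ssTerm q (p.2 * 2 ^ p.1) ((p.2 + 1) * 2 ^ p.1)

theorem dyadicSum_nonneg (a b : ℕ) : 0 ≤ dyadicSum q L a b :=
  sum_nonneg fun _ _ => ssTerm_nonneg q _ _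

theorem dyadicSum_add_le {a m b : ℕ} (h₁ : a ≤ m) (h₂ : m ≤ b) :
    dyadicSum q L a m + dyadicSum q L m b ≤ dyadicSum q L a b := by
  have hdisj : Disjoint (dyadicIndices L a m) (dyadicIndices L m b) := by
    refine disjoint_left.2 fun p hp hp' => ?_
    rw [mem_dyadicIndices] at hp hp'
    have : p.2 * 2 ^ p.1 < (p.2 + 1) * 2 ^ p.1 :=
      Nat.mul_lt_mul_of_pos_right (Nat.lt_succ_self _) (by positivity)
    omega
  rw [dyadicSum, dyadicSum, ← sum_union hdisj]
  refine sum_le_sum_of_subset_of_nonneg (fun p hp => ?_) fun _ _ _ => ssTerm_nonneg q _ _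
  rw [mem_union, mem_dyadicIndices, mem_dyadicIndices] at hp
  rw [mem_dyadicIndices]
  omega

theorem ssTerm_le_dyadicSum {s : ℕ} (hs : s ≤ L) (c : ℕ) :
    ssTerm q (c * 2 ^ s) ((c + 1) * 2 ^ s) ≤ dyadicSum q L (c * 2 ^ s) ((c + 1) * 2 ^ s) := by
  have hmem : (s, c) ∈ dyadicIndices L (c * 2 ^ s) ((c + 1) * 2 ^ s) :=
    mem_dyadicIndices.2 ⟨hs, le_rfl, le_rfl⟩
  exact single_le_sum (fun p _ => ssTerm_nonneg q (p.2 * 2 ^ p.1) ((p.2 + 1) * 2 ^ p.1)) hmem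

variable {q L}

theorem ssTerm_le_dyadicSum_of_suffix (hn : 0 < n) {s : ℕ} (hs : s ≤ L) {c a : ℕ}
    (hca : c * 2 ^ s ≤ a) (hac : a < (c + 1) * 2 ^ s) :
    ssTerm q a ((c + 1) * 2 ^ s) ≤ 1000 * dyadicSum q L a ((c + 1) * 2 ^ s) := by
  induction s generalizing c a with
  | zero =>
    obtain rfl : a = c * 2 ^ 0 := by simp only [pow_zero, mul_one] at *; omega
    linarith [ssTerm_le_dyadicSum q L hs c, dyadicSum_nonneg q L (c * 2 ^ 0) ((c + 1) * 2 ^ 0)]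
  | succ s ih =>
    rw [show (c + 1) * 2 ^ (s + 1) = (2 * c + 1 + 1) * 2 ^ s by ring] at hac ⊢
    rw [show c * 2 ^ (s + 1) = 2 * c * 2 ^ s by ring] at hca
    obtain ham | ham := le_or_gt ((2 * c + 1) * 2 ^ s) a
    · exact ih (by omega) ham hac
    have hP : 0 < 2 ^ s := by positivity
    have hmid : (2 * c + 1) * 2 ^ s = 2 * c * 2 ^ s + 2 ^ s := by ring
    have hlen : (2 * c + 1 + 1) * 2 ^ s = (2 * c + 1) * 2 ^ s + 2 ^ s := by ring
    have hsplit := ssTerm_le_of_two_mul_le (q := q) (b := (2 * c + 1 + 1) * 2 ^ s) hn ham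
      (by omega) (by omega)
    have hsum := dyadicSum_add_le q L (b := (2 * c + 1 + 1) * 2 ^ s) ham.le (by omega)
    linarith [ih (by omega) hca ham, ssTerm_le_dyadicSum q L (by omega : s ≤ L) (2 * c + 1),
      dyadicSum_nonneg q L a ((2 * c + 1) * 2 ^ s),
      dyadicSum_nonneg q L ((2 * c + 1) * 2 ^ s) ((2 * c + 1 + 1) * 2 ^ s)]

theorem ssTerm_le_dyadicSum_of_prefix (hn : 0 < n) {s : ℕ} (hs : s ≤ L) {c b : ℕ}
    (hcb : c * 2 ^ s < b) (hbc : b ≤ (c + 1) * 2 ^ s) :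
    ssTerm q (c * 2 ^ s) b ≤ 1000 * dyadicSum q L (c * 2 ^ s) b := by
  induction s generalizing c b with
  | zero =>
    obtain rfl : b = (c + 1) * 2 ^ 0 := by simp only [pow_zero, mul_one] at *; omega
    linarith [ssTerm_le_dyadicSum q L hs c, dyadicSum_nonneg q L (c * 2 ^ 0) ((c + 1) * 2 ^ 0)]
  | succ s ih =>
    rw [show c * 2 ^ (s + 1) = 2 * c * 2 ^ s by ring] at hcb ⊢
    rw [show (c + 1) * 2 ^ (s + 1) = (2 * c + 1 + 1) * 2 ^ s by ring] at hbc
    obtain hbm | hmb := le_or_gt b ((2 * c + 1) * 2 ^ s)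
    · exact ih (by omega) hcb hbm
    have hP : 0 < 2 ^ s := by positivity
    have hmid : (2 * c + 1) * 2 ^ s = 2 * c * 2 ^ s + 2 ^ s := by ring
    have hlen : (2 * c + 1 + 1) * 2 ^ s = (2 * c + 1) * 2 ^ s + 2 ^ s := by ring
    have hsplit := ssTerm_le_of_le_two_mul (q := q) (a := 2 * c * 2 ^ s) hn (by omega) hmb
      (by omega)
    have hsum := dyadicSum_add_le q L (a := 2 * c * 2 ^ s) (by omega) hmb.le
    linarith [ih (by omega) hmb hbc, ssTerm_le_dyadicSum q L (by omega : s ≤ L) (2 * c),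
      dyadicSum_nonneg q L (2 * c * 2 ^ s) ((2 * c + 1) * 2 ^ s),
      dyadicSum_nonneg q L ((2 * c + 1) * 2 ^ s) b]

theorem ssTerm_le_dyadicSum_of_cross (hn : 0 < n) {s : ℕ} (hs : s ≤ L) {c a b : ℕ}
    (hca : c * 2 ^ s ≤ a) (hac : a < (c + 1) * 2 ^ s) (hcb : (c + 1) * 2 ^ s < b)
    (hbc : b ≤ (c + 1 + 1) * 2 ^ s) :
    ssTerm q a b ≤ 2000 * dyadicSum q L a b := by
  have hsplit := ssTerm_le_two_mul_add (q := q) hn hac hcb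
  have hsum := dyadicSum_add_le q L hac.le hcb.le
  linarith [ssTerm_le_dyadicSum_of_suffix (q := q) hn hs hca hac,
    ssTerm_le_dyadicSum_of_prefix (q := q) hn hs hcb hbc]

theorem ssTerm_le_dyadicSum_of_subblock (hn : 0 < n) {s : ℕ} (hs : s ≤ L) {c a b : ℕ}
    (hca : c * 2 ^ s ≤ a) (hab : a < b) (hbc : b ≤ (c + 1) * 2 ^ s) :
    ssTerm q a b ≤ 2000 * dyadicSum q L a b := by
  induction s generalizing c a b with
  | zero =>
    obtain ⟨rfl, rfl⟩ : a = c * 2 ^ 0 ∧ b = (c + 1) * 2 ^ 0 := by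
      simp only [pow_zero, mul_one] at *; omega
    linarith [ssTerm_le_dyadicSum q L hs c, dyadicSum_nonneg q L (c * 2 ^ 0) ((c + 1) * 2 ^ 0)]
  | succ s ih =>
    rw [show c * 2 ^ (s + 1) = 2 * c * 2 ^ s by ring] at hca
    rw [show (c + 1) * 2 ^ (s + 1) = (2 * c + 1 + 1) * 2 ^ s by ring] at hbc
    obtain hbm | hmb := le_or_gt b ((2 * c + 1) * 2 ^ s)
    · exact ih (by omega) hca hab hbm
    obtain hma | ham := le_or_gt ((2 * c + 1) * 2 ^ s) a
    · exact ih (by omega) hma hab hbc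
    exact ssTerm_le_dyadicSum_of_cross hn (by omega) hca ham hmb hbc

theorem ssTerm_le_dyadicSum_of_sub_le (hn : 0 < n) {a b : ℕ} (hab : a < b)
    (hlen : b - a ≤ 2 ^ L) : ssTerm q a b ≤ 2000 * dyadicSum q L a b := by
  have hP : 0 < 2 ^ L := by positivity
  have hca : a / 2 ^ L * 2 ^ L ≤ a := Nat.div_mul_le_self a _
  have hac : a < (a / 2 ^ L + 1) * 2 ^ L := by
    rw [add_mul, one_mul]; exact Nat.lt_div_mul_add hP
  obtain hbc | hcb := le_or_gt b ((a / 2 ^ L + 1) * 2 ^ L)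
  · exact ssTerm_le_dyadicSum_of_subblock hn le_rfl hca hab hbc
  have hnext : (a / 2 ^ L + 1 + 1) * 2 ^ L = (a / 2 ^ L + 1) * 2 ^ L + 2 ^ L := by ring
  exact ssTerm_le_dyadicSum_of_cross hn le_rfl hca hac hcb (by omega)

variable (q)

theorem sum_levels_eq_dyadicSum (k : ℕ) {j₀ : ℕ} (hj₀ : 1 ≤ j₀) :
    ∑ j ∈ range j₀, ∑ i ∈ range (k * 2 ^ j),
        ssTerm q (i * (k * 2 ^ (j₀ - 1) / (k * 2 ^ j)))
          ((i + 1) * (k * 2 ^ (j₀ - 1) / (k * 2 ^ j))) =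
      dyadicSum q (j₀ - 1) 0 (k * 2 ^ (j₀ - 1)) := by
  obtain ⟨L, rfl⟩ : ∃ L, j₀ = L + 1 := ⟨j₀ - 1, by omega⟩
  rw [Nat.add_sub_cancel, dyadicSum, dyadicIndices, sum_filter, sum_product]
  symm
  refine (sum_range_reflect _ (L + 1)).symm.trans (sum_congr rfl fun j hj => ?_)
  rw [mem_range] at hj
  have hsplit : k * 2 ^ L = k * 2 ^ j * 2 ^ (L - j) := by
    rw [mul_assoc, ← pow_add, Nat.add_sub_cancel' (by omega)]
  have hlevel : (range (k * 2 ^ L)).filter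
      (fun i => 0 ≤ i * 2 ^ (L - j) ∧ (i + 1) * 2 ^ (L - j) ≤ k * 2 ^ L) = range (k * 2 ^ j) := by
    ext i
    rw [mem_filter, mem_range, mem_range, hsplit, Nat.mul_le_mul_right_iff (by positivity)]
    constructor
    · omega
    · intro hi
      exact ⟨hi.trans_le (Nat.le_mul_of_pos_right _ (by positivity)), by omega, by omega⟩
  rw [Nat.add_sub_cancel, ← sum_filter, hlevel]
  refine sum_congr rfl fun i hi => ?_
  rw [Nat.div_eq_of_eq_mul_left (by rw [mem_range] at hi; omega) (hsplit.trans (mul_comm _ _))]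

end Dyadic

theorem sub_le_pow_of_intervalWidth_le {k L a b : ℕ} (hn : 0 < k * 2 ^ L)
    (h : intervalWidth (k * 2 ^ L) a b ≤ 1 / k) : b - a ≤ 2 ^ L := by
  have hk : (0 : ℝ) < k := by exact_mod_cast Nat.pos_of_mul_pos_right hn
  unfold intervalWidth at h
  rw [Nat.cast_mul, Nat.cast_pow, div_le_div_iff₀ (by positivity) hk, one_mul, mul_comm] at h
  exact_mod_cast le_of_mul_le_mul_left h hk

theorem scale_sensitive_le_level_sums_general (k j₀ : ℕ) (hj₀ : 1 ≤ j₀)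
    (q : Fin (k * 2 ^ (j₀ - 1)) → ℝ) :
    ssDistSq (k * 2 ^ (j₀ - 1)) k q ≤
      10 ^ 8 * ∑ j ∈ Finset.range j₀, ∑ i ∈ Finset.range (k * 2 ^ j),
        ssTerm q (i * (k * 2 ^ (j₀ - 1) / (k * 2 ^ j)))
          ((i + 1) * (k * 2 ^ (j₀ - 1) / (k * 2 ^ j))) := by
  rw [sum_levels_eq_dyadicSum q k hj₀]
  have hS := dyadicSum_nonneg q (j₀ - 1) 0 (k * 2 ^ (j₀ - 1))
  refine Real.sSup_le ?_ (by positivity)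
  rintro _ ⟨r, b, hb, hb₀, hbr, hwidth, rfl⟩
  have hterm (i : Fin r) : ssTerm q (b i.castSucc) (b i.succ) ≤
      2000 * dyadicSum q (j₀ - 1) (b i.castSucc) (b i.succ) := by
    have hlt : b i.castSucc < b i.succ := hb Fin.castSucc_lt_succ
    have hn : 0 < k * 2 ^ (j₀ - 1) := 
      (Nat.zero_le _).trans_lt (hlt.trans_le (hbr ▸ hb.monotone (Fin.le_last _)))
    exact ssTerm_le_dyadicSum_of_sub_le hn hlt (sub_le_pow_of_intervalWidth_le hn (hwidth i))
  calc ∑ i : Fin r, ssTerm q (b i.castSucc) (b i.succ)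
      ≤ 2000 * ∑ i : Fin r, dyadicSum q (j₀ - 1) (b i.castSucc) (b i.succ) := by
        rw [mul_sum]; exact sum_le_sum fun i _ => hterm i
    _ ≤ 2000 * dyadicSum q (j₀ - 1) (b 0) (b (Fin.last r)) := by
        gcongr
        exact hb.monotone.sum_le_of_superadditive (fun _ _ _ => dyadicSum_add_le q _)
          (fun _ => dyadicSum_nonneg q _ _ _)
    _ ≤ 10 ^ 8 * dyadicSum q (j₀ - 1) 0 (k * 2 ^ (j₀ - 1)) := by
        rw [hb₀, hbr]; linarith

/-- **Proposition: the dyadic level sums dominate the scale-sensitive-`L2` distance.**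
For `n = k·2^{j₀-1}`,
`‖q - U_n‖²_{[k]} ≤ 10⁸ · ∑_{j<j₀} ∑_{i<k·2^j} Discr(I_i^{(j)})² / width(I_i^{(j)})^{1/8}`,
where `I^{(j)}` is the partition of `[n]` into `k·2^j` equal consecutive intervals. -/
theorem scale_sensitive_le_level_sums (k j₀ : ℕ) (hk : 2 ≤ k) (hj₀ : 1 ≤ j₀)
    (q : Fin (k * 2 ^ (j₀ - 1)) → ℝ) (hq : IsDist q) :
    ssDistSq (k * 2 ^ (j₀ - 1)) k q ≤
      10 ^ 8 * ∑ j ∈ Finset.range j₀, ∑ i ∈ Finset.range (k * 2 ^ j),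
        ssTerm q (i * (k * 2 ^ (j₀ - 1) / (k * 2 ^ j)))
          ((i + 1) * (k * 2 ^ (j₀ - 1) / (k * 2 ^ j))) :=
  scale_sensitive_le_level_sums_general k j₀ hj₀ q
end

section
/- There exists a universal constant c₀ > 0 with the following property. Let k ≥ 2 be an integer, let ε ∈ (0,1), let j₀ be an integer with j₀ ≥ log₂(1/ε) + c₀, let n be divisible by k·2^{j₀−1}, and let q be a k-flat probability distribution on [n]. If ‖q − U_n‖_1 ≥ ε, then there exists an integer j with 0 ≤ j ≤ j₀−1 such that ‖q_r^{I^{(j)}} − U_{k·2^j}‖₂² ≥ ε²·2^{−j/4} / (6400·k). -/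
open Finset ProbabilityTheory MeasureTheory

open Finset
open scoped Classical

noncomputable def iSum {n : ℕ} (f : Fin n → ℝ) (a b : ℕ) : ℝ :=
  ∑ j ∈ Finset.univ.filter (fun j : Fin n => a ≤ (j : ℕ) ∧ (j : ℕ) < b), f j

lemma iSum_split {n : ℕ} (f : Fin n → ℝ) {a b c : ℕ} (h1 : a ≤ b) (h2 : b ≤ c) :
    iSum f a c = iSum f a b + iSum f b c := by
  unfold iSum
  rw [← Finset.sum_union]
  · congr 1
    ext j
    simp only [Finset.mem_union, Finset.mem_filter, Finset.mem_univ, true_and]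
    omega
  · simp only [Finset.disjoint_left, Finset.mem_filter, Finset.mem_univ, true_and]
    omega

lemma card_interval {n : ℕ} (a b : ℕ) (hb : b ≤ n) :
    (Finset.univ.filter (fun j : Fin n => a ≤ (j : ℕ) ∧ (j : ℕ) < b)).card = b - a := by
  rw [← Nat.card_Ico a b]
  apply Finset.card_bij (fun (j : Fin n) _ => (j : ℕ))
  · intro j hj; simp only [Finset.mem_filter] at hj; simp only [Finset.mem_Ico]; omega
  · intro j1 _ j2 _ h; exact Fin.ext h
  · intro m hm
    simp only [Finset.mem_Ico] at hm
    exact ⟨⟨m, by omega⟩, by simp only [Finset.mem_filter, Finset.mem_univ, true_and]; omega, rfl⟩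

lemma iSum_const {n : ℕ} (f : Fin n → ℝ) {a b : ℕ} (hb : b ≤ n) (c : ℝ)
    (hc : ∀ x : Fin n, a ≤ (x : ℕ) → (x : ℕ) < b → f x = c) :
    iSum f a b = ((b - a : ℕ) : ℝ) * c := by
  unfold iSum
  rw [Finset.sum_congr rfl (fun x hx => by
        simp only [Finset.mem_filter, Finset.mem_univ, true_and] at hx
        exact hc x hx.1 hx.2),
    Finset.sum_const, card_interval a b hb, nsmul_eq_mul]

lemma iSum_total {n : ℕ} (f : Fin n → ℝ) : iSum f 0 n = ∑ x, f x := by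
  unfold iSum
  apply Finset.sum_congr _ (fun _ _ => rfl)
  ext j
  simp [j.isLt]

lemma iSum_blocks {n : ℕ} (f : Fin n → ℝ) (w : ℕ) (m : ℕ) :
    iSum f 0 (m * w) = ∑ i ∈ Finset.range m, iSum f (i * w) ((i + 1) * w) := by
  induction m with
  | zero => simp [iSum]
  | succ m ih =>
    rw [Finset.sum_range_succ, ← ih,
      iSum_split f (Nat.zero_le _) (Nat.mul_le_mul_right w (by omega) : m * w ≤ (m+1) * w)]

lemma sum_pair (m : ℕ) (f : ℕ → ℝ) :
    ∑ i ∈ Finset.range (2 * m), f i = ∑ p ∈ Finset.range m, (f (2 * p) + f (2 * p + 1)) := by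
  induction m with
  | zero => simp
  | succ m ih =>
    have h : 2 * (m + 1) = 2 * m + 1 + 1 := by ring
    rw [h, Finset.sum_range_succ, Finset.sum_range_succ, ih, Finset.sum_range_succ]
    ring

lemma sum_abs_le_sqrt_card_mul (s : Finset ℕ) (g : ℕ → ℝ) :
    ∑ i ∈ s, |g i| ≤ Real.sqrt (s.card * ∑ i ∈ s, g i ^ 2) := by
  have h := Finset.sum_mul_sq_le_sq_mul_sq s (fun _ => 1) (fun i => |g i|)
  simp only [one_mul, one_pow, sq_abs] at h
  have h1 : ∑ i ∈ s, (1:ℝ) = s.card := by simp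
  rw [h1] at h
  have h2 : (0:ℝ) ≤ ∑ i ∈ s, |g i| := Finset.sum_nonneg fun i _ => abs_nonneg _
  calc ∑ i ∈ s, |g i| = Real.sqrt ((∑ i ∈ s, |g i|)^2) := (Real.sqrt_sq h2).symm
    _ ≤ Real.sqrt (s.card * ∑ i ∈ s, g i ^ 2) := Real.sqrt_le_sqrt h

lemma abs_pair_ineq (a b u : ℝ) : |a - u| + |b - u| ≤ |a - b| + |a + b - 2 * u| := by
  rcases abs_cases (a - u) with ⟨h1, _⟩ | ⟨h1, _⟩ <;>
  rcases abs_cases (b - u) with ⟨h2, _⟩ | ⟨h2, _⟩ <;>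
  rcases abs_cases (a - b) with ⟨h3, _⟩ | ⟨h3, _⟩ <;>
  rcases abs_cases (a + b - 2 * u) with ⟨h4, _⟩ | ⟨h4, _⟩ <;>
  linarith

def GoodI {K : ℕ} (b : Fin (K + 1) → ℕ) (w i : ℕ) : Prop :=
  ∃ m : Fin K, b m.castSucc ≤ i * w ∧ (i + 1) * w ≤ b m.succ

lemma crossing {n K : ℕ} (b : Fin (K + 1) → ℕ) (hmono : Monotone b) (hb0 : b 0 = 0)
    (hbl : b (Fin.last K) = n) {ℓ w i : ℕ} (hw : 0 < w) (hn : ℓ * w = n) (hi : i < ℓ)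
    (hbad : ¬ GoodI b w i) :
    ∃ m : Fin K, b m.castSucc ≤ i * w ∧ i * w < b m.succ ∧ b m.succ < (i + 1) * w := by
  classical
  have hKpos : 0 < K + 1 := Nat.succ_pos K
  set S : Finset (Fin (K + 1)) := Finset.univ.filter (fun m => b m ≤ i * w) with hS
  have hne : S.Nonempty := ⟨⟨0, hKpos⟩, by
    simp only [hS, Finset.mem_filter, Finset.mem_univ, true_and]
    have : b ⟨0, hKpos⟩ = 0 := hb0
    omega⟩
  set M := S.max' hne with hM
  have hMmem : M ∈ S := S.max'_mem hne
  have hMle : b M ≤ i * w := by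
    have := hMmem; simp only [hS, Finset.mem_filter] at this; exact this.2
  have hiwn : i * w < n := by
    calc i * w < (i + 1) * w := by
          have : i * w + w = (i+1)*w := by ring
          omega
      _ ≤ ℓ * w := Nat.mul_le_mul_right w (by omega)
      _ = n := hn
  have hMk : (M : ℕ) < K := by
    by_contra h
    have : M = Fin.last K := by
      apply Fin.ext
      simp only [Fin.val_last]
      omega
    rw [this, hbl] at hMle
    omega
  refine ⟨⟨M, hMk⟩, ?_, ?_, ?_⟩
  · have : Fin.castSucc (⟨(M : ℕ), hMk⟩ : Fin K) = M := by
      apply Fin.ext; simp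
    rw [this]; exact hMle
  · by_contra h
    push_neg at h
    have hmem : Fin.succ (⟨(M : ℕ), hMk⟩ : Fin K) ∈ S := by
      simp only [hS, Finset.mem_filter, Finset.mem_univ, true_and]; exact h
    have := S.le_max' _ hmem
    rw [← hM] at this
    have h2 : ((Fin.succ (⟨(M : ℕ), hMk⟩ : Fin K)) : ℕ) ≤ (M : ℕ) := this
    simp only [Fin.val_succ] at h2
    omega
  · by_contra h
    push_neg at h
    apply hbad
    refine ⟨⟨(M : ℕ), hMk⟩, ?_, h⟩
    have : Fin.castSucc (⟨(M : ℕ), hMk⟩ : Fin K) = M := by apply Fin.ext; simp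
    rw [this]; exact hMle

lemma bad_card {n K : ℕ} (b : Fin (K + 1) → ℕ) (hmono : Monotone b) (hb0 : b 0 = 0)
    (hbl : b (Fin.last K) = n) {ℓ w : ℕ} (hK : 0 < K) (hw : 0 < w) (hn : ℓ * w = n) :
    ((Finset.range ℓ).filter (fun i => ¬ GoodI b w i)).card ≤ K := by
  classical
  have hcross : ∀ i, i < ℓ ∧ ¬ GoodI b w i →
      ∃ m : Fin K, b m.castSucc ≤ i * w ∧ i * w < b m.succ ∧ b m.succ < (i + 1) * w :=
    fun i hi => crossing b hmono hb0 hbl hw hn hi.1 hi.2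
  set f : ℕ → Fin K := fun i =>
    if h : i < ℓ ∧ ¬ GoodI b w i then (hcross i h).choose else ⟨0, hK⟩ with hf
  have : ((Finset.range ℓ).filter (fun i => ¬ GoodI b w i)).card ≤ (Finset.univ : Finset (Fin K)).card := by
    apply Finset.card_le_card_of_injOn f (fun _ _ => Finset.mem_univ _)
    intro i1 h1 i2 h2 heq
    simp only [Finset.coe_filter, Set.mem_setOf_eq, Finset.mem_range] at h1 h2
    have hh1 : i1 < ℓ ∧ ¬ GoodI b w i1 := ⟨h1.1, h1.2⟩
    have hh2 : i2 < ℓ ∧ ¬ GoodI b w i2 := ⟨h2.1, h2.2⟩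
    have hs1 := (hcross i1 hh1).choose_spec
    have hs2 := (hcross i2 hh2).choose_spec
    rw [hf] at heq
    simp only [dif_pos hh1, dif_pos hh2] at heq
    rw [heq] at hs1
    set v := b (Fin.succ (hcross i2 hh2).choose)
    by_contra hne
    rcases Nat.lt_or_ge i1 i2 with hlt | hge
    · have : (i1 + 1) * w ≤ i2 * w := Nat.mul_le_mul_right w (by omega)
      omega
    · have hlt : i2 < i1 := by omega
      have : (i2 + 1) * w ≤ i1 * w := Nat.mul_le_mul_right w (by omega)
      omega
  simpa using this

lemma rpow_base : (2:ℝ) ^ (-(1:ℝ)/8) ≤ 14/15 := by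
  have h8 : ((2:ℝ) ^ (-(1:ℝ)/8)) ^ (8:ℕ) = 1/2 := by
    rw [← Real.rpow_natCast ((2:ℝ) ^ (-(1:ℝ)/8)) 8, ← Real.rpow_mul (by norm_num)]
    norm_num
  have hpos : (0:ℝ) ≤ (2:ℝ) ^ (-(1:ℝ)/8) := le_of_lt (Real.rpow_pos_of_pos (by norm_num) _)
  have : ((2:ℝ) ^ (-(1:ℝ)/8)) ^ (8:ℕ) ≤ (14/15:ℝ) ^ (8:ℕ) := by
    rw [h8]; norm_num
  exact (pow_le_pow_iff_left₀ hpos (by norm_num) (by norm_num)).mp this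

lemma rpow_decay (m : ℕ) : (2:ℝ) ^ (-(m:ℝ)/4) ≤ ((14:ℝ)/15) ^ (2 * m) := by
  have h1 : (2:ℝ) ^ (-(m:ℝ)/4) = ((2:ℝ) ^ (-(1:ℝ)/8)) ^ (2 * m) := by
    rw [← Real.rpow_natCast ((2:ℝ) ^ (-(1:ℝ)/8)) (2*m), ← Real.rpow_mul (by norm_num)]
    congr 1
    push_cast
    ring
  rw [h1]
  exact pow_le_pow_left₀ (le_of_lt (Real.rpow_pos_of_pos (by norm_num) _)) rpow_base _

lemma geom_bound (L : ℕ) : ∑ j ∈ Finset.range L, ((14:ℝ)/15) ^ (j + 1) ≤ 14 := by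
  have h : ∑ j ∈ Finset.range L, ((14:ℝ)/15) ^ j ≤ 15 := by
    rw [geom_sum_eq (by norm_num : ((14:ℝ)/15) ≠ 1)]
    have h1 : (0:ℝ) ≤ ((14:ℝ)/15) ^ L := by positivity
    have h2 : ((14:ℝ)/15) ^ L ≤ 1 := pow_le_one₀ (by norm_num) (by norm_num)
    have : ((14:ℝ)/15) - 1 = -(1/15) := by norm_num
    rw [this]
    rw [div_le_iff_of_neg (by norm_num : -(1/15:ℝ) < 0)]
    linarith
  calc ∑ j ∈ Finset.range L, ((14:ℝ)/15) ^ (j+1)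
      = (14/15) * ∑ j ∈ Finset.range L, ((14:ℝ)/15) ^ j := by
        rw [Finset.mul_sum]; apply Finset.sum_congr rfl; intro j _; ring
    _ ≤ (14/15) * 15 := by linarith
    _ = 14 := by norm_num

lemma levelL_bound {n K : ℕ} (q : Fin n → ℝ) (hqnn : ∀ i, 0 ≤ q i)
    (b : Fin (K + 1) → ℕ) (hmono : Monotone b) (hb0 : b 0 = 0) (hbl : b (Fin.last K) = n)
    (hbc : ∀ m : Fin K, ∃ c : ℝ, ∀ x : Fin n, b m.castSucc ≤ (x:ℕ) → (x:ℕ) < b m.succ → q x = c)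
    {ℓ w : ℕ} (hK : 0 < K) (hw : 0 < w) (hn0 : 0 < n) (hn : ℓ * w = n) :
    (∑ x, |q x - 1/(n:ℝ)|) ≤
      (∑ i ∈ Finset.range ℓ, |iSum q (i*w) ((i+1)*w) - (w:ℝ)/(n:ℝ)|) + 2*K*((w:ℝ)/(n:ℝ)) := by
  have key : ∀ i ∈ Finset.range ℓ, iSum (fun x => |q x - 1/(n:ℝ)|) (i*w) ((i+1)*w)
      ≤ |iSum q (i*w) ((i+1)*w) - (w:ℝ)/n| + (if GoodI b w i then 0 else 2*((w:ℝ)/n)) := by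
    intro i hi
    simp only [Finset.mem_range] at hi
    have hle : (i+1)*w ≤ n := by
      calc (i+1)*w ≤ ℓ*w := Nat.mul_le_mul_right w (by omega)
        _ = n := hn
    have hcard : ((i+1)*w - i*w : ℕ) = w := by
      have h : (i+1)*w = i*w + w := by ring
      omega
    by_cases hg : GoodI b w i
    · rw [if_pos hg, add_zero]
      obtain ⟨m, hm1, hm2⟩ := hg
      obtain ⟨c, hc⟩ := hbc m
      have hq : ∀ x : Fin n, i*w ≤ (x:ℕ) → (x:ℕ) < (i+1)*w → q x = c :=
        fun x h1 h2 => hc x (le_trans hm1 h1) (lt_of_lt_of_le h2 hm2)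
      rw [iSum_const q hle c hq,
        iSum_const (fun x => |q x - 1/(n:ℝ)|) hle (|c - 1/(n:ℝ)|)
          (fun x h1 h2 => by simp only [hq x h1 h2]),
        hcard]
      have h2 : |(w:ℝ)*c - (w:ℝ)/n| = (w:ℝ) * |c - 1/n| := by
        rw [show (w:ℝ)*c - (w:ℝ)/n = (w:ℝ)*(c - 1/n) by ring, abs_mul,
          abs_of_nonneg (by positivity : (0:ℝ) ≤ (w:ℝ))]
      rw [h2]
    · rw [if_neg hg]
      have h1 : iSum (fun x => |q x - 1/(n:ℝ)|) (i*w) ((i+1)*w)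
          ≤ iSum q (i*w) ((i+1)*w) + (w:ℝ)/n := by
        unfold iSum
        have hterm : ∀ x : Fin n, |q x - 1/(n:ℝ)| ≤ q x + 1/n := by
          intro x
          have h0 := hqnn x
          have h1 : (0:ℝ) ≤ 1/(n:ℝ) := by positivity
          rw [abs_le]; constructor <;> linarith
        calc ∑ j ∈ Finset.univ.filter (fun j : Fin n => i*w ≤ (j:ℕ) ∧ (j:ℕ) < (i+1)*w), |q j - 1/(n:ℝ)|
            ≤ ∑ j ∈ Finset.univ.filter (fun j : Fin n => i*w ≤ (j:ℕ) ∧ (j:ℕ) < (i+1)*w), (q j + 1/(n:ℝ)) :=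
              Finset.sum_le_sum (fun j _ => hterm j)
          _ = (∑ j ∈ Finset.univ.filter (fun j : Fin n => i*w ≤ (j:ℕ) ∧ (j:ℕ) < (i+1)*w), q j)
              + (((i+1)*w - i*w : ℕ):ℝ) * (1/(n:ℝ)) := by
              rw [Finset.sum_add_distrib, Finset.sum_const, card_interval _ _ hle, nsmul_eq_mul]
          _ = iSum q (i*w) ((i+1)*w) + (w:ℝ)/n := by
              rw [hcard]; unfold iSum; ring
      have h2 : iSum q (i*w) ((i+1)*w) ≤ |iSum q (i*w) ((i+1)*w) - (w:ℝ)/n| + (w:ℝ)/n := by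
        rcases abs_cases (iSum q (i*w) ((i+1)*w) - (w:ℝ)/n) with ⟨h, _⟩ | ⟨h, _⟩ <;> linarith
      have h3 : (0:ℝ) ≤ (w:ℝ)/n := by positivity
      linarith
  have hbk := iSum_blocks (fun x : Fin n => |q x - 1/(n:ℝ)|) w ℓ
  rw [hn] at hbk
  have htot : (∑ x, |q x - 1/(n:ℝ)|)
      = ∑ i ∈ Finset.range ℓ, iSum (fun x => |q x - 1/(n:ℝ)|) (i*w) ((i+1)*w) :=
    (iSum_total _).symm.trans hbk
  rw [htot]
  have hite : ∑ i ∈ Finset.range ℓ, (if GoodI b w i then (0:ℝ) else 2*((w:ℝ)/n))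
      ≤ 2*K*((w:ℝ)/n) := by
    rw [Finset.sum_ite]
    simp only [Finset.sum_const_zero, zero_add, Finset.sum_const, nsmul_eq_mul]
    have hcard := bad_card b hmono hb0 hbl hK hw hn
    calc (((Finset.range ℓ).filter (fun i => ¬ GoodI b w i)).card : ℝ) * (2*((w:ℝ)/n))
        ≤ (K:ℝ) * (2*((w:ℝ)/n)) := by
          apply mul_le_mul_of_nonneg_right _ (by positivity)
          exact_mod_cast hcard
      _ = 2*K*((w:ℝ)/n) := by ring
  calc ∑ i ∈ Finset.range ℓ, iSum (fun x => |q x - 1/(n:ℝ)|) (i*w) ((i+1)*w)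
      ≤ ∑ i ∈ Finset.range ℓ, (|iSum q (i*w) ((i+1)*w) - (w:ℝ)/n|
          + (if GoodI b w i then 0 else 2*((w:ℝ)/n))) := Finset.sum_le_sum key
    _ = (∑ i ∈ Finset.range ℓ, |iSum q (i*w) ((i+1)*w) - (w:ℝ)/n|)
        + ∑ i ∈ Finset.range ℓ, (if GoodI b w i then (0:ℝ) else 2*((w:ℝ)/n)) :=
          Finset.sum_add_distrib
    _ ≤ _ := by linarith

lemma pair_l1_bound {n K : ℕ} (q : Fin n → ℝ)
    (b : Fin (K + 1) → ℕ) (hmono : Monotone b) (hb0 : b 0 = 0) (hbl : b (Fin.last K) = n)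
    (hbc : ∀ m : Fin K, ∃ c : ℝ, ∀ x : Fin n, b m.castSucc ≤ (x:ℕ) → (x:ℕ) < b m.succ → q x = c)
    {ℓ w' : ℕ} (hK : 0 < K) (hw' : 0 < w') (hn : ℓ * (2 * w') = n) :
    ∑ p ∈ Finset.range ℓ, |iSum q ((2*p)*w') ((2*p+1)*w') - iSum q ((2*p+1)*w') ((2*p+2)*w')|
      ≤ Real.sqrt (K * ∑ p ∈ Finset.range ℓ,
          (iSum q ((2*p)*w') ((2*p+1)*w') - iSum q ((2*p+1)*w') ((2*p+2)*w'))^2) := by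
  set g : ℕ → ℝ :=
    fun p => iSum q ((2*p)*w') ((2*p+1)*w') - iSum q ((2*p+1)*w') ((2*p+2)*w') with hg
  have hgood : ∀ p, p < ℓ → GoodI b (2*w') p → g p = 0 := by
    intro p hp hgp
    obtain ⟨m, hm1, hm2⟩ := hgp
    obtain ⟨c, hc⟩ := hbc m
    have e1 : p * (2*w') = (2*p)*w' := by ring
    have e2 : (p+1) * (2*w') = (2*p+2)*w' := by ring
    rw [e1] at hm1
    rw [e2] at hm2
    have hle2 : (2*p+2)*w' ≤ n := by
      calc (2*p+2)*w' = (p+1)*(2*w') := by ring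
        _ ≤ ℓ*(2*w') := Nat.mul_le_mul_right _ (by omega)
        _ = n := hn
    have hle1 : (2*p+1)*w' ≤ n := le_trans (Nat.mul_le_mul_right w' (by omega)) hle2
    have hq : ∀ x : Fin n, (2*p)*w' ≤ (x:ℕ) → (x:ℕ) < (2*p+2)*w' → q x = c :=
      fun x h1 h2 => hc x (le_trans hm1 h1) (lt_of_lt_of_le h2 hm2)
    have c1 : iSum q ((2*p)*w') ((2*p+1)*w') = (((2*p+1)*w' - (2*p)*w' : ℕ):ℝ) * c :=
      iSum_const q hle1 c
        (fun x h1 h2 => hq x h1 (lt_of_lt_of_le h2 (Nat.mul_le_mul_right w' (by omega))))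
    have c2 : iSum q ((2*p+1)*w') ((2*p+2)*w') = (((2*p+2)*w' - (2*p+1)*w' : ℕ):ℝ) * c :=
      iSum_const q hle2 c
        (fun x h1 h2 => hq x (le_trans (Nat.mul_le_mul_right w' (by omega)) h1) h2)
    have d1 : (2*p+1)*w' - (2*p)*w' = w' := by
      have h : (2*p+1)*w' = (2*p)*w' + w' := by ring
      omega
    have d2 : (2*p+2)*w' - (2*p+1)*w' = w' := by
      have h : (2*p+2)*w' = (2*p+1)*w' + w' := by ring
      omega
    simp only [hg]
    rw [c1, c2, d1, d2]
    ring
  classical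
  have hsub : ∑ p ∈ Finset.range ℓ, |g p|
      = ∑ p ∈ (Finset.range ℓ).filter (fun p => ¬ GoodI b (2*w') p), |g p| := by
    symm
    apply Finset.sum_subset (Finset.filter_subset _ _)
    intro x hx hnx
    have hxl : x < ℓ := Finset.mem_range.mp hx
    have hgx : GoodI b (2*w') x := by
      by_contra h
      exact hnx (Finset.mem_filter.mpr ⟨hx, h⟩)
    rw [hgood x hxl hgx, abs_zero]
  rw [hsub]
  calc ∑ p ∈ (Finset.range ℓ).filter (fun p => ¬ GoodI b (2*w') p), |g p|
      ≤ Real.sqrt ((((Finset.range ℓ).filter (fun p => ¬ GoodI b (2*w') p)).card : ℝ)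
          * ∑ p ∈ (Finset.range ℓ).filter (fun p => ¬ GoodI b (2*w') p), g p ^ 2) :=
        sum_abs_le_sqrt_card_mul _ _
    _ ≤ Real.sqrt (K * ∑ p ∈ Finset.range ℓ, g p ^ 2) := by
        apply Real.sqrt_le_sqrt
        have hcard := bad_card b hmono hb0 hbl hK (by omega : 0 < 2*w') hn
        apply mul_le_mul
        · exact_mod_cast hcard
        · exact Finset.sum_le_sum_of_subset_of_nonneg (Finset.filter_subset _ _)
            (fun i _ _ => sq_nonneg _)
        · exact Finset.sum_nonneg (fun i _ => sq_nonneg _)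
        · positivity

/-- **Structural lemma (`k`-flat case).** There is a universal constant `c₀ > 0` such that
for `k ≥ 2`, `ε ∈ (0,1)`, `j₀ ≥ log₂(1/ε) + c₀`, `n` divisible by `k·2^{j₀-1}`, and any
`k`-flat distribution `q` on `[n]` with `‖q - U_n‖₁ ≥ ε`, there is a level `0 ≤ j ≤ j₀-1`
with `‖q_r^{I^{(j)}} - U_{k·2^j}‖₂² ≥ ε²·2^{-j/4}/(6400 k)`. -/
theorem structural_lemma_kflat :
    ∃ c₀ : ℝ, 0 < c₀ ∧ ∀ (k j₀ n : ℕ) (ε : ℝ) (q : Fin n → ℝ),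
      2 ≤ k → 0 < ε → ε < 1 → Real.logb 2 (1 / ε) + c₀ ≤ (j₀ : ℝ) →
      k * 2 ^ (j₀ - 1) ∣ n →
      IsDist q → IsKFlat k q →
      ε ≤ L1Dist q (unif n) →
      ∃ j ≤ j₀ - 1,
        ε ^ 2 * (2 : ℝ) ^ (-(j : ℝ) / 4) / (6400 * k) ≤
          ∑ i : Fin (k * 2 ^ j), (reducedDist q (k * 2 ^ j) i - 1 / (k * 2 ^ j : ℝ)) ^ 2 := by
  refine ⟨4, by norm_num, ?_⟩
  intro k j₀ n ε q hk hε0 hε1 hj₀ hdvd hq hflat hL1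
  obtain ⟨hqnn, hqsum⟩ := hq
  obtain ⟨b, hbmono, hb0, hblast, hbc⟩ := hflat
  have hn0 : 0 < n := by
    rcases Nat.eq_zero_or_pos n with h | h
    · exfalso; subst h; simp at hqsum
    · exact h
  have hk0 : 0 < k := by omega
  have hlogb : 0 ≤ Real.logb 2 (1 / ε) :=
    Real.logb_nonneg (by norm_num) ((le_div_iff₀ hε0).mpr (by linarith))
  have hj4 : 4 ≤ j₀ := by
    have h4 : (4:ℝ) ≤ (j₀:ℝ) := by linarith
    exact_mod_cast h4
  by_contra hcon
  push_neg at hcon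
  have hdvd' : ∀ j, j ≤ j₀ - 1 → k * 2 ^ j ∣ n :=
    fun j hj => dvd_trans (mul_dvd_mul_left k (pow_dvd_pow 2 hj)) hdvd
  have hwmul : ∀ j, j ≤ j₀ - 1 → (k * 2 ^ j) * (n / (k * 2 ^ j)) = n :=
    fun j hj => Nat.mul_div_cancel' (hdvd' j hj)
  have hl0 : ∀ j : ℕ, 0 < k * 2 ^ j := fun j => Nat.mul_pos hk0 (pow_pos (by norm_num) j)
  have hw0 : ∀ j, j ≤ j₀ - 1 → 0 < n / (k * 2 ^ j) := by
    intro j hj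
    rcases Nat.eq_zero_or_pos (n / (k * 2 ^ j)) with h | h
    · exfalso
      have h2 := hwmul j hj
      rw [h, Nat.mul_zero] at h2
      omega
    · exact h
  have hwsucc : ∀ j, j + 1 ≤ j₀ - 1 → n / (k * 2 ^ j) = 2 * (n / (k * 2 ^ (j + 1))) := by
    intro j hj
    have h1 := hwmul (j + 1) hj
    have h2 : (k * 2 ^ j) * (2 * (n / (k * 2 ^ (j + 1)))) = n := by
      calc (k * 2 ^ j) * (2 * (n / (k * 2 ^ (j + 1))))
          = (k * 2 ^ (j + 1)) * (n / (k * 2 ^ (j + 1))) := by ring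
        _ = n := h1
    have h3 := hwmul j (by omega)
    exact Nat.eq_of_mul_eq_mul_left (hl0 j) (h3.trans h2.symm)
  have hkR : (0:ℝ) < (k:ℝ) := by exact_mod_cast hk0
  have hnR : (0:ℝ) < (n:ℝ) := by exact_mod_cast hn0
  have hwn : ∀ j, j ≤ j₀ - 1 → ((n / (k * 2 ^ j) : ℕ):ℝ) / (n:ℝ) = 1 / ((k:ℝ) * 2 ^ j) := by
    intro j hj
    have h := hwmul j hj
    have hcast : ((k:ℝ) * 2 ^ j) * ((n / (k * 2 ^ j) : ℕ):ℝ) = (n:ℝ) := by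
      exact_mod_cast congrArg (Nat.cast (R := ℝ)) h
    have hwpos : (0:ℝ) < ((n / (k * 2 ^ j) : ℕ):ℝ) := by exact_mod_cast hw0 j hj
    rw [← hcast]
    rw [eq_div_iff (by positivity)]
    field_simp
  -- bridge hcon to iSum form
  have hcon' : ∀ j, j ≤ j₀ - 1 →
      (∑ i ∈ Finset.range (k * 2 ^ j),
        (iSum q (i * (n / (k * 2 ^ j))) ((i + 1) * (n / (k * 2 ^ j))) - 1 / ((k:ℝ) * 2 ^ j)) ^ 2)
      < ε ^ 2 * (2:ℝ) ^ (-(j:ℝ) / 4) / (6400 * k) := by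
    intro j hj
    have h := hcon j hj
    have he : (∑ i : Fin (k * 2 ^ j), (reducedDist q (k * 2 ^ j) i - 1 / ((k:ℝ) * 2 ^ j)) ^ 2)
        = ∑ i ∈ Finset.range (k * 2 ^ j),
          (iSum q (i * (n / (k * 2 ^ j))) ((i + 1) * (n / (k * 2 ^ j))) - 1 / ((k:ℝ) * 2 ^ j)) ^ 2 :=
      Fin.sum_univ_eq_sum_range
        (fun i => (iSum q (i * (n / (k * 2 ^ j))) ((i + 1) * (n / (k * 2 ^ j))) - 1 / ((k:ℝ) * 2 ^ j)) ^ 2)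
        (k * 2 ^ j)
    rw [← he]
    exact h
  -- bound on the Haar ℓ¹ mass at each level
  have hHbound : ∀ m, m + 1 ≤ j₀ - 1 →
      (∑ p ∈ Finset.range (k * 2 ^ m),
        |iSum q ((2 * p) * (n / (k * 2 ^ (m + 1)))) ((2 * p + 1) * (n / (k * 2 ^ (m + 1))))
          - iSum q ((2 * p + 1) * (n / (k * 2 ^ (m + 1)))) ((2 * p + 2) * (n / (k * 2 ^ (m + 1))))|)
      ≤ (ε / 56) * ((14:ℝ) / 15) ^ (m + 1) := by
    intro m hm
    set w' := n / (k * 2 ^ (m + 1)) with hw'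
    have hw'0 : 0 < w' := hw0 (m + 1) hm
    have hnmul : (k * 2 ^ m) * (2 * w') = n := by
      calc (k * 2 ^ m) * (2 * w') = (k * 2 ^ (m + 1)) * w' := by ring
        _ = n := hwmul (m + 1) hm
    have hstep := pair_l1_bound (K := k) q b hbmono hb0 hblast hbc (by omega) hw'0 hnmul
    refine hstep.trans ?_
    have hpairsq : ∀ p : ℕ,
        (iSum q ((2*p)*w') ((2*p+1)*w') - iSum q ((2*p+1)*w') ((2*p+2)*w')) ^ 2
        ≤ 2 * ((iSum q ((2*p)*w') ((2*p+1)*w') - 1/((k:ℝ)*2^(m+1))) ^ 2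
             + (iSum q ((2*p+1)*w') ((2*p+1+1)*w') - 1/((k:ℝ)*2^(m+1))) ^ 2) := by
      intro p
      rw [show (2*p+1+1)*w' = (2*p+2)*w' from by ring]
      nlinarith [sq_nonneg (iSum q ((2*p)*w') ((2*p+1)*w') + iSum q ((2*p+1)*w') ((2*p+2)*w')
        - 2 * (1/((k:ℝ)*2^(m+1))))]
    have hS : (∑ p ∈ Finset.range (k * 2 ^ m),
        (iSum q ((2*p)*w') ((2*p+1)*w') - iSum q ((2*p+1)*w') ((2*p+2)*w')) ^ 2)
        ≤ 2 * ∑ i ∈ Finset.range (k * 2 ^ (m + 1)),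
            (iSum q (i*w') ((i+1)*w') - 1/((k:ℝ)*2^(m+1))) ^ 2 := by
      have hpair := sum_pair (k * 2 ^ m)
        (fun i => (iSum q (i*w') ((i+1)*w') - 1/((k:ℝ)*2^(m+1))) ^ 2)
      have h2m : k * 2 ^ (m + 1) = 2 * (k * 2 ^ m) := by ring
      rw [h2m, hpair, Finset.mul_sum]
      exact Finset.sum_le_sum (fun p _ => (hpairsq p).trans (le_of_eq (by ring)))
    have hL2 := hcon' (m + 1) hm
    have hT : (k:ℝ) * (∑ p ∈ Finset.range (k * 2 ^ m),
        (iSum q ((2*p)*w') ((2*p+1)*w') - iSum q ((2*p+1)*w') ((2*p+2)*w')) ^ 2)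
        ≤ ((ε / 56) * ((14:ℝ) / 15) ^ (m + 1)) ^ 2 := by
      have h1 : (k:ℝ) * (∑ p ∈ Finset.range (k * 2 ^ m),
          (iSum q ((2*p)*w') ((2*p+1)*w') - iSum q ((2*p+1)*w') ((2*p+2)*w')) ^ 2)
          ≤ (k:ℝ) * (2 * ∑ i ∈ Finset.range (k * 2 ^ (m + 1)),
            (iSum q (i*w') ((i+1)*w') - 1/((k:ℝ)*2^(m+1))) ^ 2) :=
        mul_le_mul_of_nonneg_left hS (le_of_lt hkR)
      have h2 : (k:ℝ) * (2 * ∑ i ∈ Finset.range (k * 2 ^ (m + 1)),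
            (iSum q (i*w') ((i+1)*w') - 1/((k:ℝ)*2^(m+1))) ^ 2)
          ≤ (k:ℝ) * (2 * (ε ^ 2 * (2:ℝ) ^ (-((m+1:ℕ):ℝ) / 4) / (6400 * k))) := by
        apply mul_le_mul_of_nonneg_left _ (le_of_lt hkR)
        apply mul_le_mul_of_nonneg_left (le_of_lt hL2) (by norm_num)
      have h3 : (k:ℝ) * (2 * (ε ^ 2 * (2:ℝ) ^ (-((m+1:ℕ):ℝ) / 4) / (6400 * k)))
          = ε ^ 2 * (2:ℝ) ^ (-((m+1:ℕ):ℝ) / 4) / 3200 := by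
        field_simp
        ring
      have hd := rpow_decay (m + 1)
      have h4 : ε ^ 2 * (2:ℝ) ^ (-((m+1:ℕ):ℝ) / 4) / 3200
          ≤ ((ε / 56) * ((14:ℝ) / 15) ^ (m + 1)) ^ 2 := by
        have h5 : ε ^ 2 * (2:ℝ) ^ (-((m+1:ℕ):ℝ) / 4) / 3200
            ≤ ε ^ 2 * ((14:ℝ)/15) ^ (2*(m+1)) / 3200 := by gcongr
        have h6 : ε ^ 2 * ((14:ℝ)/15) ^ (2*(m+1)) / 3200
            ≤ ε ^ 2 * ((14:ℝ)/15) ^ (2*(m+1)) / 3136 := by gcongr <;> norm_num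
        have h7 : ((ε / 56) * ((14:ℝ) / 15) ^ (m + 1)) ^ 2
            = ε ^ 2 * ((14:ℝ)/15) ^ (2*(m+1)) / 3136 := by
          rw [mul_pow, div_pow, ← pow_mul]
          ring_nf
        rw [h7]
        linarith
      linarith [h1, h2, h3.le, h4]
    calc Real.sqrt ((k:ℝ) * ∑ p ∈ Finset.range (k * 2 ^ m),
          (iSum q ((2*p)*w') ((2*p+1)*w') - iSum q ((2*p+1)*w') ((2*p+2)*w')) ^ 2)
        ≤ Real.sqrt (((ε / 56) * ((14:ℝ) / 15) ^ (m + 1)) ^ 2) := Real.sqrt_le_sqrt hT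
      _ = (ε / 56) * ((14:ℝ) / 15) ^ (m + 1) := Real.sqrt_sq (by positivity)
  -- main induction: upper bound on reduced L1 at each level
  have key : ∀ m, m ≤ j₀ - 1 →
      (∑ i ∈ Finset.range (k * 2 ^ m),
        |iSum q (i * (n / (k * 2 ^ m))) ((i + 1) * (n / (k * 2 ^ m))) - 1 / ((k:ℝ) * 2 ^ m)|)
      ≤ ε / 80 + ∑ j ∈ Finset.range m, (ε / 56) * ((14:ℝ) / 15) ^ (j + 1) := by
    intro m
    induction m with
    | zero =>
      intro _
      simp only [Finset.range_zero, Finset.sum_empty, add_zero]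
      have hcs := sum_abs_le_sqrt_card_mul (Finset.range (k * 2 ^ 0))
        (fun i => iSum q (i * (n / (k * 2 ^ 0))) ((i + 1) * (n / (k * 2 ^ 0))) - 1 / ((k:ℝ) * 2 ^ 0))
      refine hcs.trans ?_
      have hL2 := hcon' 0 (by omega)
      have hbound : ((Finset.range (k * 2 ^ 0)).card : ℝ) * (∑ i ∈ Finset.range (k * 2 ^ 0),
          (iSum q (i * (n / (k * 2 ^ 0))) ((i + 1) * (n / (k * 2 ^ 0))) - 1 / ((k:ℝ) * 2 ^ 0)) ^ 2)
          ≤ (ε / 80) ^ 2 := by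
        have hr : (2:ℝ) ^ (-((0:ℕ):ℝ) / 4) = 1 := by norm_num
        rw [hr] at hL2
        have hcard : ((Finset.range (k * 2 ^ 0)).card : ℝ) = (k:ℝ) * 2 ^ 0 := by
          rw [Finset.card_range]; push_cast; ring
        rw [hcard]
        have hsum0 : (0:ℝ) ≤ ∑ i ∈ Finset.range (k * 2 ^ 0),
            (iSum q (i * (n / (k * 2 ^ 0))) ((i + 1) * (n / (k * 2 ^ 0))) - 1 / ((k:ℝ) * 2 ^ 0)) ^ 2 :=
          Finset.sum_nonneg (fun i _ => sq_nonneg _)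
        have h1 : ((k:ℝ) * 2 ^ 0) * (∑ i ∈ Finset.range (k * 2 ^ 0),
            (iSum q (i * (n / (k * 2 ^ 0))) ((i + 1) * (n / (k * 2 ^ 0))) - 1 / ((k:ℝ) * 2 ^ 0)) ^ 2)
            ≤ ((k:ℝ) * 2 ^ 0) * (ε ^ 2 * 1 / (6400 * k)) := by
          apply mul_le_mul_of_nonneg_left (le_of_lt hL2) (by positivity)
        have h2 : ((k:ℝ) * 2 ^ 0) * (ε ^ 2 * 1 / (6400 * k)) = (ε / 80) ^ 2 := by
          field_simp
          ring
        linarith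
      calc Real.sqrt (((Finset.range (k * 2 ^ 0)).card : ℝ) * ∑ i ∈ Finset.range (k * 2 ^ 0),
            (iSum q (i * (n / (k * 2 ^ 0))) ((i + 1) * (n / (k * 2 ^ 0))) - 1 / ((k:ℝ) * 2 ^ 0)) ^ 2)
          ≤ Real.sqrt ((ε / 80) ^ 2) := Real.sqrt_le_sqrt hbound
        _ = ε / 80 := Real.sqrt_sq (by positivity)
    | succ m ih =>
      intro hm1
      have hm : m ≤ j₀ - 1 := by omega
      have ihm := ih hm
      set w' := n / (k * 2 ^ (m + 1)) with hw'
      have hwrel := hwsucc m hm1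
      have hu : 1 / ((k:ℝ) * 2 ^ m) = 2 * (1 / ((k:ℝ) * 2 ^ (m + 1))) := by
        rw [pow_succ]
        field_simp
      have h2m : k * 2 ^ (m + 1) = 2 * (k * 2 ^ m) := by ring
      have hpairA := sum_pair (k * 2 ^ m)
        (fun i => |iSum q (i * w') ((i + 1) * w') - 1 / ((k:ℝ) * 2 ^ (m + 1))|)
      rw [h2m, hpairA]
      have hstep2 : ∑ p ∈ Finset.range (k * 2 ^ m),
          (|iSum q ((2*p) * w') ((2*p + 1) * w') - 1 / ((k:ℝ) * 2 ^ (m + 1))|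
            + |iSum q ((2*p+1) * w') ((2*p+1+1) * w') - 1 / ((k:ℝ) * 2 ^ (m + 1))|)
          ≤ ∑ p ∈ Finset.range (k * 2 ^ m),
            (|iSum q ((2*p)*w') ((2*p+1)*w') - iSum q ((2*p+1)*w') ((2*p+2)*w')|
              + |iSum q (p * (n / (k * 2 ^ m))) ((p + 1) * (n / (k * 2 ^ m))) - 1 / ((k:ℝ) * 2 ^ m)|) := by
        apply Finset.sum_le_sum
        intro p _
        have happ := abs_pair_ineq (iSum q ((2*p)*w') ((2*p+1)*w'))
          (iSum q ((2*p+1)*w') ((2*p+2)*w')) (1 / ((k:ℝ) * 2 ^ (m + 1)))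
        have hsplit : iSum q (p * (n / (k * 2 ^ m))) ((p + 1) * (n / (k * 2 ^ m)))
            = iSum q ((2*p)*w') ((2*p+1)*w') + iSum q ((2*p+1)*w') ((2*p+2)*w') := by
          rw [hwrel, show p * (2 * w') = (2*p)*w' from by ring,
            show (p + 1) * (2 * w') = (2*p+2)*w' from by ring]
          exact iSum_split q (Nat.mul_le_mul_right w' (by omega)) (Nat.mul_le_mul_right w' (by omega))
        rw [hsplit, hu, show (2*p+1+1) * w' = (2*p+2)*w' from by ring]
        exact happ
      refine le_trans hstep2 ?_
      rw [Finset.sum_add_distrib, Finset.sum_range_succ]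
      have hH := hHbound m hm1
      linarith [hH, ihm]
  -- lower bound at the finest level
  have hlev := levelL_bound (K := k) q hqnn b hbmono hb0 hblast hbc (by omega) (hw0 (j₀-1) le_rfl)
    hn0 (hwmul (j₀-1) le_rfl)
  rw [hwn (j₀-1) le_rfl] at hlev
  have hL1' : ε ≤ ∑ x, |q x - 1 / (n:ℝ)| := hL1
  have hLcast : ((j₀ - 1 : ℕ):ℝ) = (j₀:ℝ) - 1 := by
    have h1 : 1 ≤ j₀ := by omega
    rw [Nat.cast_sub h1, Nat.cast_one]
  have h2L : 8 / ε ≤ (2:ℝ) ^ ((j₀ - 1 : ℕ)) := by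
    have h1 : Real.logb 2 (1 / ε) + 3 ≤ ((j₀ - 1 : ℕ):ℝ) := by rw [hLcast]; linarith
    have h2 : (2:ℝ) ^ (Real.logb 2 (1 / ε) + 3) ≤ (2:ℝ) ^ (((j₀ - 1 : ℕ):ℝ)) :=
      Real.rpow_le_rpow_of_exponent_le (by norm_num) h1
    rw [Real.rpow_natCast] at h2
    rw [Real.rpow_add (by norm_num), Real.rpow_logb (by norm_num) (by norm_num) (by positivity)] at h2
    have h3 : (2:ℝ) ^ (3:ℝ) = 8 := by
      rw [show (3:ℝ) = ((3:ℕ):ℝ) by norm_num, Real.rpow_natCast]; norm_num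
    rw [h3] at h2
    calc 8 / ε = 1 / ε * 8 := by ring
      _ ≤ _ := h2
  have hloss : 2 * (k:ℝ) * (1 / ((k:ℝ) * 2 ^ (j₀ - 1))) ≤ ε / 4 := by
    have he : 2 * (k:ℝ) * (1 / ((k:ℝ) * 2 ^ (j₀ - 1))) = 2 / (2:ℝ) ^ (j₀ - 1) := by
      field_simp
    rw [he, div_le_iff₀ (by positivity)]
    calc (2:ℝ) = ε / 4 * (8 / ε) := by field_simp; ring
      _ ≤ ε / 4 * (2:ℝ) ^ (j₀ - 1) := by
          apply mul_le_mul_of_nonneg_left h2L (by positivity)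
      _ = ε / 4 * (2:ℝ) ^ (j₀ - 1) := rfl
  have hup := key (j₀ - 1) le_rfl
  have hsum14 : ∑ j ∈ Finset.range (j₀ - 1), (ε / 56) * ((14:ℝ) / 15) ^ (j + 1) ≤ (ε / 56) * 14 := by
    rw [← Finset.mul_sum]
    exact mul_le_mul_of_nonneg_left (geom_bound (j₀ - 1)) (by positivity)
  linarith [hlev, hL1', hup, hsum14, hloss]
end

section
/- Let k be an integer with 2 ≤ k ≤ n and let q be a k-flat probability distribution on [n]. Then ‖q − U_n‖_{A_k} = ‖q − U_n‖_1. -/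
open Finset ProbabilityTheory MeasureTheory

lemma intervalMass_eq_sub {n : ℕ} (f : Fin n → ℝ) (a b : ℕ) (hab : a ≤ b) :
    intervalMass f a b =
      (∑ j ∈ Finset.univ.filter (fun j : Fin n => (j : ℕ) < b), f j)
      - ∑ j ∈ Finset.univ.filter (fun j : Fin n => (j : ℕ) < a), f j := by
  have hsub : Finset.univ.filter (fun j : Fin n => (j : ℕ) < a)
      ⊆ Finset.univ.filter (fun j : Fin n => (j : ℕ) < b) := by
    intro j hj
    simp only [Finset.mem_filter, Finset.mem_univ, true_and] at hj ⊢
    omega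
  have h := Finset.sum_sdiff (f := f) hsub
  have hset : Finset.univ.filter (fun j : Fin n => (j : ℕ) < b) \
      Finset.univ.filter (fun j : Fin n => (j : ℕ) < a)
      = Finset.univ.filter (fun j : Fin n => a ≤ (j : ℕ) ∧ (j : ℕ) < b) := by
    ext j
    simp only [Finset.mem_sdiff, Finset.mem_filter, Finset.mem_univ, true_and]
    omega
  unfold intervalMass
  rw [← hset]
  linarith [h]

lemma partition_sum {n k : ℕ} (f : Fin n → ℝ) (b : Fin (k+1) → ℕ)
    (hb : Monotone b) (h0 : b 0 = 0) (hl : b (Fin.last k) = n) :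
    ∑ i : Fin k, intervalMass f (b i.castSucc) (b i.succ) = ∑ j, f j := by
  set F : ℕ → ℝ := fun m => ∑ j ∈ Finset.univ.filter (fun j : Fin n => (j : ℕ) < m), f j with hF
  set g : ℕ → ℝ := fun m => F (b ⟨min m k, by omega⟩) with hg
  have hterm : ∀ i : Fin k, intervalMass f (b i.castSucc) (b i.succ)
      = g ((i : ℕ) + 1) - g (i : ℕ) := by
    intro i
    have hi := i.isLt
    have h1 : (⟨min ((i : ℕ) + 1) k, by omega⟩ : Fin (k+1)) = i.succ := by
      apply Fin.ext
      simp only [Fin.val_succ]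
      omega
    have h2 : (⟨min (i : ℕ) k, by omega⟩ : Fin (k+1)) = i.castSucc := by
      apply Fin.ext
      simp only [Fin.coe_castSucc]
      omega
    rw [hg]
    simp only [h1, h2]
    exact intervalMass_eq_sub f _ _ (hb (Fin.castSucc_le_succ i))
  calc ∑ i : Fin k, intervalMass f (b i.castSucc) (b i.succ)
      = ∑ i : Fin k, (g ((i : ℕ) + 1) - g (i : ℕ)) := by
        exact Finset.sum_congr rfl fun i _ => hterm i
    _ = ∑ i ∈ Finset.range k, (g (i + 1) - g i) :=
        Fin.sum_univ_eq_sum_range (fun m => g (m + 1) - g m) k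
    _ = g k - g 0 := Finset.sum_range_sub g k
    _ = ∑ j, f j := by
        have hk : (⟨min k k, by omega⟩ : Fin (k+1)) = Fin.last k := by
          apply Fin.ext; simp
        have h0' : (⟨min 0 k, by omega⟩ : Fin (k+1)) = 0 := by
          apply Fin.ext; simp
        rw [hg]
        simp only [hk, h0', hl, h0, hF]
        have e1 : Finset.univ.filter (fun j : Fin n => (j : ℕ) < n) = Finset.univ := by
          ext j
          simp only [Finset.mem_filter, Finset.mem_univ, true_and, iff_true]
          exact j.isLt
        have e2 : Finset.univ.filter (fun j : Fin n => (j : ℕ) < 0) = (∅ : Finset (Fin n)) := by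
          ext j; simp
        rw [e1, e2]
        simp

lemma intervalMass_sub {n : ℕ} (p q : Fin n → ℝ) (a b : ℕ) :
    intervalMass p a b - intervalMass q a b = intervalMass (fun j => p j - q j) a b := by
  unfold intervalMass
  rw [← Finset.sum_sub_distrib]

/-- For a `k`-flat distribution `q` on `[n]`, the `A_k` distance to the uniform distribution
equals the `L1` distance. -/
theorem Ak_eq_L1_kflat (n k : ℕ) (hk2 : 2 ≤ k) (hkn : k ≤ n)
    (q : Fin n → ℝ) (hq : IsDist q) (hflat : IsKFlat k q) :
    AkDist n k q (unif n) = L1Dist q (unif n) := by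
  obtain ⟨b, hmono, hb0, hbl, hc⟩ := hflat
  set S := { x : ℝ | ∃ b : Fin (k + 1) → ℕ, Monotone b ∧ b 0 = 0 ∧ b (Fin.last k) = n ∧
    x = ∑ i : Fin k,
      |intervalMass q (b i.castSucc) (b i.succ) - intervalMass (unif n) (b i.castSucc) (b i.succ)|} with hS
  -- upper bound
  have hub : ∀ x ∈ S, x ≤ L1Dist q (unif n) := by
    rintro x ⟨c, hcm, hc0, hcl, rfl⟩
    have : ∀ i : Fin k,
        |intervalMass q (c i.castSucc) (c i.succ) - intervalMass (unif n) (c i.castSucc) (c i.succ)|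
        ≤ intervalMass (fun j => |q j - unif n j|) (c i.castSucc) (c i.succ) := by
      intro i
      rw [intervalMass_sub]
      exact Finset.abs_sum_le_sum_abs _ _
    calc ∑ i : Fin k, |intervalMass q (c i.castSucc) (c i.succ)
            - intervalMass (unif n) (c i.castSucc) (c i.succ)|
        ≤ ∑ i : Fin k, intervalMass (fun j => |q j - unif n j|) (c i.castSucc) (c i.succ) :=
          Finset.sum_le_sum fun i _ => this i
      _ = L1Dist q (unif n) := partition_sum _ c hcm hc0 hcl
  -- membership: the flat partition achieves L1
  have hmem : L1Dist q (unif n) ∈ S := by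
    refine ⟨b, hmono, hb0, hbl, ?_⟩
    have key : ∀ i : Fin k,
        |intervalMass q (b i.castSucc) (b i.succ) - intervalMass (unif n) (b i.castSucc) (b i.succ)|
        = intervalMass (fun j => |q j - unif n j|) (b i.castSucc) (b i.succ) := by
      intro i
      obtain ⟨ci, hci⟩ := hc i
      rw [intervalMass_sub]
      unfold intervalMass
      set s := Finset.univ.filter (fun j : Fin n => b i.castSucc ≤ (j : ℕ) ∧ (j : ℕ) < b i.succ)
        with hs
      have hval : ∀ j ∈ s, q j - unif n j = ci - 1 / n := by
        intro j hj
        simp only [hs, Finset.mem_filter, Finset.mem_univ, true_and] at hj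
        rw [hci j hj.1 hj.2]; rfl
      show |∑ j ∈ s, (q j - unif n j)| = ∑ j ∈ s, |q j - unif n j|
      have h1 : ∑ j ∈ s, (q j - unif n j) = (s.card : ℝ) * (ci - 1 / n) := by
        rw [Finset.sum_congr rfl hval, Finset.sum_const, nsmul_eq_mul]
      have h2 : ∑ j ∈ s, |q j - unif n j| = (s.card : ℝ) * |ci - 1 / n| := by
        have habs : ∀ j ∈ s, |q j - unif n j| = |ci - 1 / n| := fun j hj => by rw [hval j hj]
        rw [Finset.sum_congr rfl habs, Finset.sum_const, nsmul_eq_mul]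
      rw [h1, h2, abs_mul, Nat.abs_cast]
    rw [Finset.sum_congr rfl (fun i _ => key i), partition_sum _ b hmono hb0 hbl]
    rfl
  have hne : S.Nonempty := ⟨_, hmem⟩
  have hbdd : BddAbove S := ⟨L1Dist q (unif n), hub⟩
  exact le_antisymm (csSup_le hne hub) (le_csSup hbdd hmem)
end

section
/- Let k ≥ 2 and j₀ ≥ 1 be integers, let n be divisible by k·2^{j₀−1}, and for 0 ≤ j ≤ j₀−1 let I^{(j)} be the partition of [n] into k·2^j consecutive intervals of equal length. Let J ⊆ [n] be a consecutive interval whose width w = |J|/n satisfies 4·2^{−j₀}/k < w ≤ 4/k. Then there exist an integer j with 0 ≤ j ≤ j₀−1 and an index i such that I_i^{(j)} ⊆ J and |I_i^{(j)}| ≥ |J|/4. -/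
open Finset ProbabilityTheory MeasureTheory

/-- **Dyadic interval capture.** For `n` divisible by `k·2^{j₀-1}`, any consecutive interval
`J = [a, b) ⊆ [n]` of width `w = |J|/n` with `4·2^{-j₀}/k < w ≤ 4/k` fully contains an
interval `I_i^{(j)}` of one of the dyadic partitions (`0 ≤ j ≤ j₀-1`) with
`|I_i^{(j)}| ≥ |J|/4`. -/
theorem dyadic_interval_capture (k j₀ n : ℕ) (hk : 2 ≤ k) (hj₀ : 1 ≤ j₀)
    (hdvd : k * 2 ^ (j₀ - 1) ∣ n) (hn : 0 < n)
    (a b : ℕ) (hab : a < b) (hbn : b ≤ n)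
    (hw1 : 4 * (2 : ℝ) ^ (-(j₀ : ℝ)) / k < ((b - a : ℕ) : ℝ) / n)
    (hw2 : ((b - a : ℕ) : ℝ) / n ≤ 4 / k) :
    ∃ j ≤ j₀ - 1, ∃ i < k * 2 ^ j,
      a ≤ i * (n / (k * 2 ^ j)) ∧ (i + 1) * (n / (k * 2 ^ j)) ≤ b ∧
      ((b - a : ℕ) : ℝ) / 4 ≤ ((n / (k * 2 ^ j) : ℕ) : ℝ) := by
  set d := b - a with hd
  have hd0 : 0 < d := Nat.sub_pos_of_lt hab
  have hk0 : 0 < k := by omega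
  have hn' : (0:ℝ) < n := by exact_mod_cast hn
  have hk' : (0:ℝ) < k := by exact_mod_cast hk0
  set L : ℕ → ℕ := fun j => n / (k * 2 ^ j) with hL
  have hdvdj : ∀ j ≤ j₀ - 1, k * 2 ^ j ∣ n := fun j hj =>
    dvd_trans (Nat.mul_dvd_mul_left k (pow_dvd_pow 2 hj)) hdvd
  have hLeq : ∀ j ≤ j₀ - 1, (k * 2 ^ j) * L j = n := fun j hj =>
    Nat.mul_div_cancel' (hdvdj j hj)
  have hLpos : ∀ j ≤ j₀ - 1, 0 < L j := by
    intro j hj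
    have h := hLeq j hj
    rcases Nat.eq_zero_or_pos (L j) with h0 | h0
    · rw [h0, mul_zero] at h; omega
    · exact h0
  have hhalf : ∀ j, j + 1 ≤ j₀ - 1 → L j = 2 * L (j+1) := by
    intro j hj
    have h1 := hLeq j (by omega)
    have h2 := hLeq (j+1) hj
    have h3 : (k * 2 ^ j) * L j = (k * 2 ^ j) * (2 * L (j+1)) := by
      rw [h1, ← h2, pow_succ]; ring
    exact Nat.eq_of_mul_eq_mul_left (by positivity) h3
  -- hw1 in nat: 2 * L (j₀-1) < d
  have hj₀e : j₀ = (j₀ - 1) + 1 := by omega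
  have hw1n : 2 * L (j₀ - 1) < d := by
    have h2pow : (2:ℝ) ^ (-(j₀:ℝ)) = ((2:ℝ)^(j₀:ℕ))⁻¹ := by
      rw [← Real.rpow_natCast 2 j₀, ← Real.rpow_neg (by norm_num)]
    rw [h2pow, div_lt_div_iff₀ hk' hn'] at hw1
    have hEq : ((k:ℝ) * 2 ^ (j₀-1)) * (L (j₀-1) : ℝ) = n := by
      exact_mod_cast hLeq (j₀ - 1) le_rfl
    have hpow : (2:ℝ) ^ (j₀:ℕ) = 2 * 2 ^ (j₀ - 1) := by
      have h := pow_succ (2:ℝ) (j₀-1)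
      rw [← hj₀e] at h; linarith
    have hppos : (0:ℝ) < (2:ℝ)^(j₀-1) := by positivity
    have hpos : (0:ℝ) < (2:ℝ)^(j₀:ℕ) := by positivity
    have key : (2 * L (j₀-1) : ℝ) < d := by
      rw [hpow] at hw1
      have h4 : 4 * ((2:ℝ) * 2 ^ (j₀-1))⁻¹ * n = 2 * (L (j₀-1):ℝ) * k := by
        field_simp
        nlinarith [hEq]
      rw [h4] at hw1
      exact lt_of_mul_lt_mul_right hw1 hk'.le
    exact_mod_cast key
  -- hw2 in nat: d ≤ 4 * L 0
  have hw2n : d ≤ 4 * L 0 := by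
    rw [div_le_div_iff₀ hn' hk'] at hw2
    have hEq : (k:ℝ) * (L 0 : ℝ) = n := by
      have h := hLeq 0 (by omega); push_cast [← h]; ring
    have : (d:ℝ) ≤ 4 * L 0 := by nlinarith
    exact_mod_cast this
  classical
  have hexP : ∃ j, 2 * L j ≤ d := ⟨j₀ - 1, hw1n.le⟩
  set j := Nat.find hexP with hjdef
  have hjle : j ≤ j₀ - 1 := Nat.find_min' hexP hw1n.le
  have hjP : 2 * L j ≤ d := Nat.find_spec hexP
  have hjub : d ≤ 4 * L j := by
    rcases Nat.eq_zero_or_pos j with h0 | hpos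
    · rw [h0]; exact hw2n
    · have hmin : ¬ (2 * L (j - 1) ≤ d) := Nat.find_min hexP (by omega)
      have hh : L (j - 1) = 2 * L j := by
        have h := hhalf (j - 1) (by omega)
        rwa [Nat.sub_add_cancel hpos] at h
      omega
  set Lj := L j with hLjdef
  have hLjpos : 0 < Lj := hLpos j hjle
  -- choose i = ⌈a / Lj⌉
  set i := (a + Lj - 1) / Lj with hidef
  have hi1 : a ≤ i * Lj ∧ i * Lj ≤ a + Lj - 1 := by
    have hdm := Nat.div_add_mod (a + Lj - 1) Lj
    have hmod : (a + Lj - 1) % Lj < Lj := Nat.mod_lt _ hLjpos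
    rw [mul_comm]
    generalize hP : Lj * i = P at hdm ⊢
    generalize hR : (a + Lj - 1) % Lj = R at hdm hmod
    omega
  have hba : b = a + d := by omega
  have hi2 : (i + 1) * Lj ≤ b := by
    have hexp : (i+1) * Lj = i * Lj + Lj := by ring
    have h1 := hi1.2
    generalize (i+1) * Lj = Q at hexp ⊢
    generalize i * Lj = P at hexp h1
    omega
  have hnval : (k * 2 ^ j) * Lj = n := hLeq j hjle
  have hi3 : i < k * 2 ^ j := by
    by_contra hcon
    push_neg at hcon
    have h5 : (k * 2 ^ j + 1) * Lj ≤ (i + 1) * Lj :=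
      Nat.mul_le_mul_right _ (by omega)
    have h6 : (k * 2 ^ j + 1) * Lj = n + Lj := by rw [← hnval]; ring
    omega
  refine ⟨j, hjle, i, hi3, hi1.1, hi2, ?_⟩
  have : (d:ℝ) ≤ 4 * Lj := by exact_mod_cast hjub
  linarith
end

section
/- Let q and p be probability distributions on [n] such that p_i = α_i/N for positive integers α_1,…,α_n with Σ_{i=1}^n α_i = N. Partition [N] into consecutive blocks B_1,…,B_n with |B_i| = α_i (in order), and define the distribution q' on [N] by q'_j = q_i/α_i for every j ∈ B_i. Then for every integer k with 2 ≤ k ≤ n: ‖q − p‖_{A_k} = ‖q' − U_N‖_{A_k}. -/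
open Finset ProbabilityTheory MeasureTheory

/-!
Let `D(m) = (q - p)([0, m))` and `D'(t) = (q' - U_N)([0, t))` be the cumulative discrepancies.
The `A_k` distance is the largest value of `∑ |D(bᵢ₊₁) - D(bᵢ)|` over boundary sequences
`0 = b₀ ≤ ⋯ ≤ b_k = n`, and likewise for `D'` on `[N]`. With block ends `Sₘ = α₀ + ⋯ + α_{m-1}`,
`D'(Sₘ) = D(m)` and `D'` is affine on every block `[Sₘ, Sₘ₊₁]`. So `b ↦ S ∘ b` carries partitions
of `[n]` to partitions of `[N]` with the same value. Conversely, the value is a convex function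
of the common position of all boundary points equal to some `v` inside a block, so moving them
to the nearest block end or other boundary point on one side does not decrease it; repeating
this puts every boundary point at a block end.
-/

noncomputable def prefixMass {M : ℕ} (h : Fin M → ℝ) (a : ℕ) : ℝ :=
  ∑ j ∈ univ.filter (fun j : Fin M => (j : ℕ) < a), h j

section Masses

variable {M : ℕ}

@[simp]
lemma prefixMass_zero (h : Fin M → ℝ) : prefixMass h 0 = 0 := by
  simp [prefixMass]

lemma prefixMass_add_intervalMass (h : Fin M → ℝ) {a b : ℕ} (hab : a ≤ b) :
    prefixMass h a + intervalMass h a b = prefixMass h b := by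
  unfold prefixMass intervalMass
  rw [← sum_union (disjoint_filter.2 fun j _ h₁ h₂ => by omega)]
  exact sum_congr (by ext j; simp only [mem_union, mem_filter, mem_univ, true_and]; omega)
    fun _ _ => rfl

lemma intervalMass_sub_intervalMass (f g : Fin M → ℝ) {a b : ℕ} (hab : a ≤ b) :
    intervalMass f a b - intervalMass g a b = prefixMass (f - g) b - prefixMass (f - g) a := by
  rw [← prefixMass_add_intervalMass (f - g) hab, add_sub_cancel_left, intervalMass, intervalMass,
    intervalMass, ← sum_sub_distrib]
  rfl

lemma card_filter_le_val_lt {a b : ℕ} (hbM : b ≤ M) :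
    (univ.filter fun j : Fin M => a ≤ (j : ℕ) ∧ (j : ℕ) < b).card = b - a := by
  rw [← Nat.card_Ico a b]
  refine card_bij (fun j _ => (j : ℕ)) (fun j hj => ?_) (fun _ _ _ _ h => Fin.ext h)
    fun x hx => ?_
  · simpa only [mem_filter, mem_univ, true_and, mem_Ico] using hj
  · rw [mem_Ico] at hx
    exact ⟨⟨x, by omega⟩, by simpa using hx, rfl⟩

lemma intervalMass_of_forall_eq {h : Fin M → ℝ} {a b : ℕ} (hbM : b ≤ M) {c : ℝ}
    (hc : ∀ j : Fin M, a ≤ (j : ℕ) → (j : ℕ) < b → h j = c) :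
    intervalMass h a b = (b - a : ℕ) * c := by
  rw [intervalMass, sum_congr rfl fun j hj => hc j (mem_filter.1 hj).2.1 (mem_filter.1 hj).2.2,
    sum_const, card_filter_le_val_lt hbM, nsmul_eq_mul]

end Masses

def IsIntervalPartition {k : ℕ} (M : ℕ) (b : Fin (k + 1) → ℕ) : Prop :=
  Monotone b ∧ b 0 = 0 ∧ b (Fin.last k) = M

def partitionVariation {k : ℕ} (f : ℕ → ℝ) (b : Fin (k + 1) → ℕ) : ℝ :=
  ∑ i : Fin k, |f (b i.succ) - f (b i.castSucc)|

noncomputable def kVariation (k M : ℕ) (f : ℕ → ℝ) : ℝ :=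
  sSup (partitionVariation f '' {b : Fin (k + 1) → ℕ | IsIntervalPartition M b})

section Variation

variable {k M : ℕ} {b : Fin (k + 1) → ℕ}

lemma IsIntervalPartition.le (hb : IsIntervalPartition M b) (x : Fin (k + 1)) : b x ≤ M :=
  hb.2.2 ▸ hb.1 (Fin.le_last x)

lemma IsIntervalPartition.comp {n : ℕ} {S : ℕ → ℕ} (hb : IsIntervalPartition n b)
    (hS : MonotoneOn S (Set.Iic n)) (hS0 : S 0 = 0) : IsIntervalPartition (S n) (S ∘ b) :=
  ⟨fun _ _ hxy => hS (hb.le _) (hb.le _) (hb.1 hxy), by simp [hb.2.1, hS0], by simp [hb.2.2]⟩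

lemma partitionVariation_nonneg (f : ℕ → ℝ) (b : Fin (k + 1) → ℕ) :
    0 ≤ partitionVariation f b :=
  sum_nonneg fun _ _ => abs_nonneg _

lemma kVariation_nonneg (k M : ℕ) (f : ℕ → ℝ) : 0 ≤ kVariation k M f :=
  Real.sSup_nonneg (Set.forall_mem_image.2 fun b _ => partitionVariation_nonneg f b)

lemma bddAbove_partitionVariation (f : ℕ → ℝ) (k M : ℕ) :
    BddAbove (partitionVariation f '' {b : Fin (k + 1) → ℕ | IsIntervalPartition M b}) := by
  refine ⟨k * (2 * ∑ t ∈ range (M + 1), |f t|), ?_⟩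
  rintro _ ⟨b, hb, rfl⟩
  have hf : ∀ x, |f (b x)| ≤ ∑ t ∈ range (M + 1), |f t| := fun x =>
    single_le_sum (f := fun t => |f t|) (fun _ _ => abs_nonneg _)
      (mem_range.2 (Nat.lt_succ_of_le (hb.le x)))
  calc partitionVariation f b ≤ ∑ _i : Fin k, 2 * ∑ t ∈ range (M + 1), |f t| :=
        sum_le_sum fun i _ => (abs_sub _ _).trans (by linarith [hf i.succ, hf i.castSucc])
    _ = _ := by simp

lemma kVariation_congr {f g : ℕ → ℝ} (hfg : ∀ m ≤ M, f m = g m) :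
    kVariation k M f = kVariation k M g := by
  refine congrArg sSup (Set.image_congr fun b hb => sum_congr rfl fun i _ => ?_)
  rw [hfg _ (hb.le _), hfg _ (hb.le _)]

lemma AkDist_eq_kVariation (M k : ℕ) (f g : Fin M → ℝ) :
    AkDist M k f g = kVariation k M (prefixMass (f - g)) := by
  have hsum : ∀ b : Fin (k + 1) → ℕ, Monotone b →
      ∑ i : Fin k, |intervalMass f (b i.castSucc) (b i.succ) -
        intervalMass g (b i.castSucc) (b i.succ)| = partitionVariation (prefixMass (f - g)) b :=
    fun b hb => sum_congr rfl fun i _ => by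
      rw [intervalMass_sub_intervalMass f g (hb i.castSucc_le_succ)]
  refine congrArg sSup (Set.ext fun x => ⟨?_, ?_⟩)
  · rintro ⟨b, hb, h0, hl, rfl⟩
    exact ⟨b, ⟨hb, h0, hl⟩, (hsum b hb).symm⟩
  · rintro ⟨b, ⟨hb, h0, hl⟩, rfl⟩
    exact ⟨b, hb, h0, hl, (hsum b hb).symm⟩

end Variation

lemma sum_abs_add_mul_le_max {ι : Type*} (s : Finset ι) (u w : ι → ℝ) {x y z : ℝ}
    (hz : z ∈ Set.Icc x y) :
    ∑ i ∈ s, |u i + w i * z| ≤ max (∑ i ∈ s, |u i + w i * x|) (∑ i ∈ s, |u i + w i * y|) := by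
  have hconv : ConvexOn ℝ Set.univ fun t => ∑ i ∈ s, |u i + w i * t| := by
    refine ⟨convex_univ, fun x _ y _ a b ha hb hab => ?_⟩
    simp only [smul_eq_mul, mul_sum, ← sum_add_distrib]
    refine sum_le_sum fun i _ => ?_
    calc |u i + w i * (a * x + b * y)| = |a * (u i + w i * x) + b * (u i + w i * y)| := by
          congr 1; linear_combination (-u i) * hab
      _ ≤ a * |u i + w i * x| + b * |u i + w i * y| := by
          refine (abs_add_le _ _).trans_eq ?_
          rw [abs_mul, abs_mul, abs_of_nonneg ha, abs_of_nonneg hb]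
  exact hconv.le_on_segment (Set.mem_univ _) (Set.mem_univ _)
    (segment_eq_Icc (hz.1.trans hz.2) ▸ hz)

lemma exists_lt_lt_of_notMem_image (S : ℕ → ℕ) {n v : ℕ} (h0 : S 0 ≤ v) (hn : v ≤ S n)
    (hv : v ∉ (range (n + 1)).image S) : ∃ m < n, S m < v ∧ v < S (m + 1) := by
  induction n with
  | zero => exact absurd (mem_image.2 ⟨0, by simp, le_antisymm h0 hn⟩) hv
  | succ n ih =>
    by_cases hvn : v ≤ S n
    · obtain ⟨m, hm, h⟩ := ih hvn fun h => hv (image_subset_image (range_subset_range.2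
        (Nat.le_succ _)) h)
      exact ⟨m, by omega, h⟩
    · exact ⟨n, by omega, by omega,
        lt_of_le_of_ne hn fun h => hv (mem_image.2 ⟨n + 1, by simp, h.symm⟩)⟩

lemma exists_max_lt_of_lt (s : Finset ℕ) {a v : ℕ} (hav : a < v) :
    ∃ Q ∈ insert a s, a ≤ Q ∧ Q < v ∧ ∀ w ∈ s, w < v → w ≤ Q := by
  obtain ⟨Q, hQ, hmax⟩ := ((insert a s).filter (· < v)).exists_max_image id
    ⟨a, mem_filter.2 ⟨mem_insert_self a s, hav⟩⟩
  simp only [mem_filter, id] at hQ hmax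
  exact ⟨Q, hQ.1, hmax a ⟨mem_insert_self a s, hav⟩, hQ.2,
    fun w hw hwv => hmax w ⟨mem_insert_of_mem hw, hwv⟩⟩

lemma exists_min_gt_of_lt (s : Finset ℕ) {a v : ℕ} (hva : v < a) :
    ∃ P ∈ insert a s, v < P ∧ P ≤ a ∧ ∀ w ∈ s, v < w → P ≤ w := by
  obtain ⟨P, hP, hmin⟩ := ((insert a s).filter (v < ·)).exists_min_image id
    ⟨a, mem_filter.2 ⟨mem_insert_self a s, hva⟩⟩
  simp only [mem_filter, id] at hP hmin
  exact ⟨P, hP.1, hP.2, hmin a ⟨mem_insert_self a s, hva⟩,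
    fun w hw hvw => hmin w ⟨mem_insert_of_mem hw, hvw⟩⟩

section MoveValue

open Function

variable {k M : ℕ} {b : Fin (k + 1) → ℕ} {v t : ℕ}

lemma IsIntervalPartition.update_comp (hb : IsIntervalPartition M b) (hv0 : v ≠ 0) (hvM : v ≠ M)
    (hlt : ∀ x, b x < v → b x ≤ t) (hgt : ∀ x, v < b x → t ≤ b x) :
    IsIntervalPartition M (update id v t ∘ b) := by
  refine ⟨fun x y hxy => ?_, by simp [hb.2.1, hv0.symm], by simp [hb.2.2, hvM.symm]⟩
  have := hb.1 hxy
  simp only [comp_apply, update_apply, id]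
  split_ifs with hx hy hy
  · exact le_rfl
  · exact hgt y (by omega)
  · exact hlt x (by omega)
  · exact this

lemma image_update_comp_sdiff_ssubset (B : Finset ℕ) (hv : v ∈ univ.image b \ B)
    (ht : t ∈ B ∪ univ.image b) (htv : t ≠ v) :
    univ.image (update id v t ∘ b) \ B ⊂ univ.image b \ B := by
  refine Finset.ssubset_of_subset_of_ssubset (fun w hw => ?_) (erase_ssubset hv)
  obtain ⟨hw, hwB⟩ := mem_sdiff.1 hw
  obtain ⟨x, -, rfl⟩ := mem_image.1 hw
  by_cases hx : b x = v
  · have htB : t ∉ B := by simpa [update_apply, hx] using hwB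
    simp only [comp_apply, update_apply, hx, if_true, id]
    exact mem_erase.2 ⟨htv, mem_sdiff.2 ⟨(mem_union.1 ht).resolve_left htB, htB⟩⟩
  · simp only [comp_apply, update_apply, hx, if_false, id] at hwB ⊢
    exact mem_erase.2 ⟨hx, mem_sdiff.2 ⟨mem_image_of_mem b (mem_univ x), hwB⟩⟩

lemma partitionVariation_le_max_update_comp (b : Fin (k + 1) → ℕ) {f : ℕ → ℝ} {Q v P : ℕ}
    (hQv : Q ≤ v) (hvP : v ≤ P) {a c : ℝ} (hf : ∀ t ∈ Set.Icc Q P, f t = a + c * t) :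
    partitionVariation f b ≤ max (partitionVariation f (update id v Q ∘ b))
      (partitionVariation f (update id v P ∘ b)) := by
  let a' : Fin (k + 1) → ℝ := fun x => if b x = v then a else f (b x)
  let c' : Fin (k + 1) → ℝ := fun x => if b x = v then c else 0
  have hvar : ∀ t ∈ Set.Icc Q P, partitionVariation f (update id v t ∘ b) =
      ∑ i : Fin k, |(a' i.succ - a' i.castSucc) + (c' i.succ - c' i.castSucc) * t| := by
    have hmove : ∀ t ∈ Set.Icc Q P, ∀ x, f ((update id v t ∘ b) x) = a' x + c' x * t := by
      intro t ht x
      by_cases hx : b x = v <;> simp [a', c', hx, hf t ht]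
    intro t ht
    refine sum_congr rfl fun i _ => ?_
    rw [hmove t ht, hmove t ht]
    congr 1
    ring
  have hPQ : Q ≤ P := hQv.trans hvP
  calc partitionVariation f b = partitionVariation f (update id v v ∘ b) := by
        rw [show update id v v = id from update_eq_self v id, id_comp]
    _ ≤ _ := by
      rw [hvar v ⟨hQv, hvP⟩, hvar Q ⟨le_rfl, hPQ⟩, hvar P ⟨hPQ, le_rfl⟩]
      exact sum_abs_add_mul_le_max _ _ _ ⟨by exact_mod_cast hQv, by exact_mod_cast hvP⟩

end MoveValue

section PiecewiseAffine

variable {k n : ℕ} {S : ℕ → ℕ} {f : ℕ → ℝ}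

lemma exists_comp_eq_of_image_subset (hS : StrictMonoOn S (Set.Iic n)) (hS0 : S 0 = 0)
    {b' : Fin (k + 1) → ℕ} (hb' : IsIntervalPartition (S n) b')
    (himg : univ.image b' ⊆ (range (n + 1)).image S) :
    ∃ b, IsIntervalPartition n b ∧ S ∘ b = b' := by
  have hpre : ∀ x, ∃ m ≤ n, S m = b' x := fun x => by
    simpa [Nat.lt_succ_iff] using himg (mem_image_of_mem b' (mem_univ x))
  choose b hbn hSb using hpre
  refine ⟨b, ⟨fun x y hxy => ?_, ?_, ?_⟩, funext hSb⟩
  · exact (hS.le_iff_le (hbn x) (hbn y)).1 (by rw [hSb, hSb]; exact hb'.1 hxy)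
  · exact hS.injOn (hbn 0) (Nat.zero_le n) (by rw [hSb, hb'.2.1, hS0])
  · exact hS.injOn (hbn _) (le_refl n) (by rw [hSb, hb'.2.2])

lemma exists_partitionVariation_le_of_mem_sdiff (hS0 : S 0 = 0)
    (haff : ∀ m < n, ∃ a c : ℝ, ∀ t ∈ Set.Icc (S m) (S (m + 1)), f t = a + c * t)
    {b : Fin (k + 1) → ℕ} (hb : IsIntervalPartition (S n) b) {v : ℕ}
    (hv : v ∈ univ.image b \ (range (n + 1)).image S) :
    ∃ b' : Fin (k + 1) → ℕ, IsIntervalPartition (S n) b' ∧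
      univ.image b' \ (range (n + 1)).image S ⊂ univ.image b \ (range (n + 1)).image S ∧
      partitionVariation f b ≤ partitionVariation f b' := by
  obtain ⟨hvb, hvB⟩ := mem_sdiff.1 hv
  have hSB : ∀ m ≤ n, S m ∈ (range (n + 1)).image S := fun m hm =>
    mem_image_of_mem S (mem_range.2 (Nat.lt_succ_of_le hm))
  have hv0 : v ≠ 0 := fun h => hvB (h ▸ hS0 ▸ hSB 0 (Nat.zero_le n))
  have hvN : v ≠ S n := fun h => hvB (h ▸ hSB n le_rfl)
  obtain ⟨x₀, -, hx₀⟩ := mem_image.1 hvb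
  obtain ⟨m, hmn, hmv, hvm⟩ :=
    exists_lt_lt_of_notMem_image S (by rw [hS0]; exact Nat.zero_le v) (hx₀ ▸ hb.le x₀) hvB
  obtain ⟨Q, hQmem, hmQ, hQv, hQ⟩ := exists_max_lt_of_lt (univ.image b) hmv
  obtain ⟨P, hPmem, hvP, hPm, hP⟩ := exists_min_gt_of_lt (univ.image b) hvm
  have hmem : ∀ t j, j ≤ n → t ∈ insert (S j) (univ.image b) →
      t ∈ (range (n + 1)).image S ∪ univ.image b := fun t j hj ht => by
    rcases mem_insert.1 ht with rfl | ht
    exacts [mem_union_left _ (hSB j hj), mem_union_right _ ht]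
  have himg : ∀ x, b x ∈ univ.image b := fun x => mem_image_of_mem b (mem_univ x)
  obtain ⟨a, c, hf⟩ := haff m hmn
  rcases le_max_iff.1 (partitionVariation_le_max_update_comp b hQv.le hvP.le (a := a) (c := c)
    fun t ht => hf t ⟨hmQ.trans ht.1, ht.2.trans hPm⟩) with hle | hle
  · refine ⟨_, hb.update_comp hv0 hvN (fun x hx => hQ _ (himg x) hx) (fun x hx => by omega),
      image_update_comp_sdiff_ssubset _ hv (hmem Q m hmn.le hQmem) hQv.ne, hle⟩
  · refine ⟨_, hb.update_comp hv0 hvN (fun x hx => by omega) (fun x hx => hP _ (himg x) hx),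
      image_update_comp_sdiff_ssubset _ hv (hmem P (m + 1) hmn hPmem) hvP.ne', hle⟩

theorem exists_partitionVariation_le_comp (hS : StrictMonoOn S (Set.Iic n)) (hS0 : S 0 = 0)
    (haff : ∀ m < n, ∃ a c : ℝ, ∀ t ∈ Set.Icc (S m) (S (m + 1)), f t = a + c * t)
    {b' : Fin (k + 1) → ℕ} (hb' : IsIntervalPartition (S n) b') :
    ∃ b : Fin (k + 1) → ℕ, IsIntervalPartition n b ∧
      partitionVariation f b' ≤ partitionVariation (f ∘ S) b := by
  induction hs : univ.image b' \ (range (n + 1)).image S using Finset.strongInduction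
    generalizing b' with
  | H s ih =>
    by_cases hsub : univ.image b' ⊆ (range (n + 1)).image S
    · obtain ⟨b, hb, rfl⟩ := exists_comp_eq_of_image_subset hS hS0 hb' hsub
      exact ⟨b, hb, le_rfl⟩
    · obtain ⟨v, hv⟩ := sdiff_nonempty.2 hsub
      obtain ⟨b'', hb'', hlt, hle⟩ := exists_partitionVariation_le_of_mem_sdiff hS0 haff hb' hv
      obtain ⟨b, hb, hle'⟩ := ih _ (hs ▸ hlt) hb'' rfl
      exact ⟨b, hb, hle.trans hle'⟩

theorem kVariation_comp_eq (hS : StrictMonoOn S (Set.Iic n)) (hS0 : S 0 = 0)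
    (haff : ∀ m < n, ∃ a c : ℝ, ∀ t ∈ Set.Icc (S m) (S (m + 1)), f t = a + c * t) :
    kVariation k n (f ∘ S) = kVariation k (S n) f := by
  refine le_antisymm (Real.sSup_le (Set.forall_mem_image.2 fun b hb => ?_) (kVariation_nonneg ..))
    (Real.sSup_le (Set.forall_mem_image.2 fun b' hb' => ?_) (kVariation_nonneg ..))
  · exact le_csSup (bddAbove_partitionVariation f k (S n))
      ⟨S ∘ b, hb.comp hS.monotoneOn hS0, rfl⟩
  · obtain ⟨b, hb, hle⟩ := exists_partitionVariation_le_comp hS hS0 haff hb'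
    exact hle.trans (le_csSup (bddAbove_partitionVariation (f ∘ S) k n) ⟨b, hb, rfl⟩)

end PiecewiseAffine

def IsBlockSpread {n N : ℕ} (α : ℕ → ℕ) (q : Fin n → ℝ) (q' : Fin N → ℝ) : Prop :=
  ∀ (i : Fin n) (j : Fin N), ∑ t ∈ range i, α t ≤ j → j < ∑ t ∈ range (i + 1), α t →
    q' j = q i / α i

section Reduction

variable {n N : ℕ} {α : ℕ → ℕ} {q : Fin n → ℝ} {q' : Fin N → ℝ}

lemma strictMonoOn_sum_range (hα : ∀ i < n, 0 < α i) :
    StrictMonoOn (fun m => ∑ t ∈ range m, α t) (Set.Iic n) :=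
  strictMonoOn_Iic_of_lt_succ fun m hm => by
    simpa [sum_range_succ] using hα m (Nat.lt_of_succ_le (Order.succ_le_of_lt hm))

lemma prefixMass_sub_unif_of_mem_block (hN : ∑ i ∈ range n, α i = N)
    (hq' : IsBlockSpread α q q') {m : ℕ} (hm : m < n) {t : ℕ}
    (ht : t ∈ Set.Icc (∑ i ∈ range m, α i) (∑ i ∈ range (m + 1), α i)) :
    prefixMass (q' - unif N) t = prefixMass (q' - unif N) (∑ i ∈ range m, α i) +
      (t - ∑ i ∈ range m, α i : ℕ) * (q ⟨m, hm⟩ / α m - 1 / N) := by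
  have htN : t ≤ N := hN ▸ ht.2.trans (sum_le_sum_of_subset (range_subset_range.2 hm))
  rw [← prefixMass_add_intervalMass _ ht.1, intervalMass_of_forall_eq htN fun j hj₁ hj₂ => ?_]
  simp [unif, hq' ⟨m, hm⟩ j hj₁ (hj₂.trans_le ht.2)]

lemma prefixMass_sub_unif_sum_range (hα : ∀ i < n, 0 < α i) (hN : ∑ i ∈ range n, α i = N)
    {p : Fin n → ℝ} (hpα : ∀ i : Fin n, p i = (α (i : ℕ) : ℝ) / N)
    (hq' : IsBlockSpread α q q') {m : ℕ} (hm : m ≤ n) :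
    prefixMass (q' - unif N) (∑ i ∈ range m, α i) = prefixMass (q - p) m := by
  induction m with
  | zero => simp
  | succ m ih =>
    have hmn : m < n := hm
    have hα0 : (α m : ℝ) ≠ 0 := by exact_mod_cast (hα m hmn).ne'
    have hstep : intervalMass (q - p) m (m + 1) = q ⟨m, hmn⟩ - p ⟨m, hmn⟩ := by
      rw [intervalMass_of_forall_eq (c := (q - p) ⟨m, hmn⟩) hmn fun j hj₁ hj₂ => by
        rw [show j = ⟨m, hmn⟩ from Fin.ext (Nat.le_antisymm (Nat.lt_succ_iff.1 hj₂) hj₁)]]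
      simp
    rw [prefixMass_sub_unif_of_mem_block hN hq' hmn ⟨sum_le_sum_of_subset (range_subset_range.2
      (Nat.le_succ m)), le_rfl⟩, ih hmn.le, ← prefixMass_add_intervalMass _ (Nat.le_succ m), hstep,
      sum_range_succ, Nat.add_sub_cancel_left, hpα, mul_sub, mul_div_cancel₀ _ hα0, mul_one_div]

lemma prefixMass_sub_unif_affine_on_block (hN : ∑ i ∈ range n, α i = N)
    (hq' : IsBlockSpread α q q') {m : ℕ} (hm : m < n) :
    ∃ a c : ℝ, ∀ t ∈ Set.Icc (∑ i ∈ range m, α i) (∑ i ∈ range (m + 1), α i),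
      prefixMass (q' - unif N) t = a + c * t := by
  set c : ℝ := q ⟨m, hm⟩ / α m - 1 / N
  refine ⟨prefixMass (q' - unif N) (∑ i ∈ range m, α i) - (∑ i ∈ range m, α i : ℕ) * c, c,
    fun t ht => ?_⟩
  rw [prefixMass_sub_unif_of_mem_block hN hq' hm ht, Nat.cast_sub ht.1]
  ring

end Reduction

theorem identity_to_uniformity_reduction_general (n N k : ℕ)
    (α : ℕ → ℕ) (hα : ∀ i < n, 0 < α i) (hN : ∑ i ∈ Finset.range n, α i = N)
    (q p : Fin n → ℝ)
    (hpα : ∀ i : Fin n, p i = (α (i : ℕ) : ℝ) / N)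
    (q' : Fin N → ℝ)
    (hq' : ∀ (i : Fin n) (j : Fin N),
      ∑ t ∈ Finset.range (i : ℕ), α t ≤ (j : ℕ) →
      (j : ℕ) < ∑ t ∈ Finset.range ((i : ℕ) + 1), α t →
      q' j = q i / (α (i : ℕ) : ℝ)) :
    AkDist n k q p = AkDist N k q' (unif N) := by
  calc AkDist n k q p = kVariation k n (prefixMass (q - p)) := AkDist_eq_kVariation n k q p
    _ = kVariation k n (prefixMass (q' - unif N) ∘ fun m => ∑ i ∈ range m, α i) :=
        kVariation_congr fun m hm => (prefixMass_sub_unif_sum_range hα hN hpα hq' hm).symm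
    _ = kVariation k (∑ i ∈ range n, α i) (prefixMass (q' - unif N)) :=
        kVariation_comp_eq (strictMonoOn_sum_range hα) rfl
          fun m hm => prefixMass_sub_unif_affine_on_block hN hq' hm
    _ = AkDist N k q' (unif N) := by rw [hN, AkDist_eq_kVariation]

/-- **The identity-to-uniformity reduction preserves the `A_k` distance.**
Let `p i = αᵢ/N` with positive integers `αᵢ` summing to `N`, and let `q'` on `[N]` spread the
mass `q i` uniformly over the `i`-th consecutive block of `αᵢ` points. Then
`‖q - p‖_{A_k} = ‖q' - U_N‖_{A_k}`. -/
theorem identity_to_uniformity_reduction (n N k : ℕ) (hn : 1 ≤ n)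
    (hk2 : 2 ≤ k) (hkn : k ≤ n)
    (α : ℕ → ℕ) (hα : ∀ i < n, 0 < α i) (hN : ∑ i ∈ Finset.range n, α i = N)
    (q p : Fin n → ℝ) (hq : IsDist q) (hp : IsDist p)
    (hpα : ∀ i : Fin n, p i = (α (i : ℕ) : ℝ) / N)
    (q' : Fin N → ℝ)
    (hq' : ∀ (i : Fin n) (j : Fin N),
      ∑ t ∈ Finset.range (i : ℕ), α t ≤ (j : ℕ) →
      (j : ℕ) < ∑ t ∈ Finset.range ((i : ℕ) + 1), α t →
      q' j = q i / (α (i : ℕ) : ℝ)) :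
    AkDist n k q p = AkDist N k q' (unif N) :=
  identity_to_uniformity_reduction_general n N k α hα hN q p hpα q' hq'
end
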